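/- arXiv:2506.14029 — 5 statements merged into one kernel-verified Lean document; each statement's English description precedes it below -/
import Mathlib

section
/- Let p be a probability measure on ℕ with infinite support such that ∑_{i≥0} p(i,i)² < ∞, where p(i,j) := p(j) / ∑_{ℓ≥i} p(ℓ). Let (X_i)_{i≥1} be i.i.d. samples from p, let T_0 = 1 and T_k = inf{ i > T_{k-1} : X_i ≥ X_j for all j < i } be the record times, and R_k = X_{T_k} the record values. Then almost surely, for all sufficiently large k, R_{k+1} > R_k (records are eventually simple). -/
open MeasureTheory ProbabilityTheory Filter
open scoped ENNReal

/-- The record times of a sequence: `T 0 = 1`,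
`T (k+1) = inf { i > T k : X i ≥ X j for all 1 ≤ j < i }`. -/
noncomputable def recT {Ω : Type*} (X : ℕ → Ω → ℕ) (ω : Ω) : ℕ → ℕ
  | 0 => 1
  | k + 1 => sInf {i : ℕ | recT X ω k < i ∧ ∀ j, 1 ≤ j → j < i → X j ω ≤ X i ω}

/-- The record values `R k = X (T k)`. -/
noncomputable def recV {Ω : Type*} (X : ℕ → Ω → ℕ) (ω : Ω) (k : ℕ) : ℕ :=
  X (recT X ω k) ω

/-- Auxiliary event: the value `i` appears at times `t < s` and all values before
time `s` are at most `i`. -/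
def Ev {Ω : Type*} (X : ℕ → Ω → ℕ) (i t s : ℕ) : Set Ω :=
  {ω | X t ω = i ∧ X s ω = i ∧ ∀ j, 1 ≤ j → j < s → X j ω ≤ i}

/-- The event that a "repeat at value `i`" configuration occurs. -/
def Cset {Ω : Type*} (X : ℕ → Ω → ℕ) (i : ℕ) : Set Ω :=
  {ω | ∃ t s : ℕ, 1 ≤ t ∧ t < s ∧ ω ∈ Ev X i t s}

/-- Deterministic part: if values exceeding any bound occur beyond any time, and
no repeat configuration occurs at values `≥ M`, then records are eventually simple. -/
lemma det_lemma {Ω : Type*} (X : ℕ → Ω → ℕ) (ω : Ω)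
    (h2 : ∀ n v : ℕ, ∃ i, n < i ∧ v < X i ω)
    (M : ℕ) (hM : ∀ i, M ≤ i → ω ∉ Cset X i) :
    ∃ K, ∀ k ≥ K, recV X ω k < recV X ω (k + 1) := by
  have D1 : ∀ n v : ℕ, ∃ s, n < s ∧ v ≤ X s ω ∧
      ∀ j, 1 ≤ j → j < s → X j ω ≤ X s ω := by
    intro n v
    obtain ⟨i, hi, hiW⟩ := h2 n (max v ((Finset.Iic n).sup fun j => X j ω))
    have hne : {i : ℕ | max v ((Finset.Iic n).sup fun j => X j ω) < X i ω}.Nonempty :=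
      ⟨i, hiW⟩
    set s := sInf {i : ℕ | max v ((Finset.Iic n).sup fun j => X j ω) < X i ω} with hs
    have hsmem : max v ((Finset.Iic n).sup fun j => X j ω) < X s ω := Nat.sInf_mem hne
    have hlt : ∀ j, j < s → X j ω ≤ max v ((Finset.Iic n).sup fun j => X j ω) :=
      fun j hj => not_lt.1 (fun hgt => Nat.notMem_of_lt_sInf hj hgt)
    have hns : n < s := by
      by_contra h
      push_neg at h
      have : X s ω ≤ max v ((Finset.Iic n).sup fun j => X j ω) :=
        le_max_iff.2 (Or.inr (Finset.le_sup (f := fun j => X j ω) (Finset.mem_Iic.2 h)))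
      omega
    exact ⟨s, hns, (le_max_left _ _).trans hsmem.le,
      fun j h1 hj => ((hlt j hj).trans hsmem.le)⟩
  have hdef : ∀ k, recT X ω (k+1)
      = sInf {i : ℕ | recT X ω k < i ∧ ∀ j, 1 ≤ j → j < i → X j ω ≤ X i ω} := fun k => rfl
  have hset : ∀ k, recT X ω k < recT X ω (k+1) ∧
      ∀ j, 1 ≤ j → j < recT X ω (k+1) → X j ω ≤ X (recT X ω (k+1)) ω := by
    intro k
    obtain ⟨s, hns, _, hrec⟩ := D1 (recT X ω k) 0
    have hne : {i : ℕ | recT X ω k < i ∧ ∀ j, 1 ≤ j → j < i → X j ω ≤ X i ω}.Nonempty :=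
      ⟨s, hns, hrec⟩
    have h := Nat.sInf_mem hne
    rw [← hdef k] at h
    exact h
  have h1le : ∀ k, 1 ≤ recT X ω k := by
    intro k
    induction k with
    | zero => exact le_refl 1
    | succ k ih => exact ih.trans (hset k).1.le
  have hmono : Monotone (recV X ω) :=
    monotone_nat_of_le_succ fun k => (hset k).2 _ (h1le k) (hset k).1
  have hTge : ∀ k, k + 1 ≤ recT X ω k := by
    intro k
    induction k with
    | zero => exact le_refl 1
    | succ k ih => exact Nat.succ_le_of_lt (lt_of_le_of_lt ih (hset k).1)
  have hunb : ∀ v, ∃ k, v ≤ recV X ω k := by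
    intro v
    obtain ⟨s, hs0, hsv, hrec⟩ := D1 0 v
    have hex : ∃ k, s ≤ recT X ω k := ⟨s, (Nat.le_succ s).trans (hTge s)⟩
    have hk0s : s ≤ recT X ω (Nat.find hex) := Nat.find_spec hex
    have hTeq : recT X ω (Nat.find hex) = s := by
      rcases hk : Nat.find hex with - | m
      · rw [hk] at hk0s
        have h01 : recT X ω 0 = 1 := rfl
        omega
      · have hm : ¬ s ≤ recT X ω m := Nat.find_min hex (hk ▸ m.lt_succ_self)
        push_neg at hm
        have hmem : s ∈ {i : ℕ | recT X ω m < i ∧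
            ∀ j, 1 ≤ j → j < i → X j ω ≤ X i ω} := ⟨hm, hrec⟩
        have hle : recT X ω (m+1) ≤ s := by
          rw [hdef m]; exact Nat.sInf_le hmem
        rw [hk] at hk0s
        exact le_antisymm hle hk0s
    exact ⟨Nat.find hex, by rw [recV, hTeq]; exact hsv⟩
  obtain ⟨K, hK⟩ := hunb M
  refine ⟨K, fun k hk => ?_⟩
  by_contra hcon
  push_neg at hcon
  have heq : recV X ω (k+1) = recV X ω k := le_antisymm hcon (hmono (Nat.le_succ k))
  have hMi : M ≤ recV X ω k := hK.trans (hmono hk)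
  exact hM _ hMi ⟨recT X ω k, recT X ω (k+1), h1le k, (hset k).1,
    rfl, heq, fun j hj hjs => ((hset k).2 j hj hjs).trans_eq heq⟩

/-- if `p` has infinite support and `∑ᵢ p(i,i)² < ∞`, where
`p(i,j) = p(j)/∑_{ℓ ≥ i} p(ℓ)`, then records of an i.i.d. sample from `p`
are eventually simple almost surely. -/
theorem eventually_simple_records_of_summable_sq
    {Ω : Type*} [MeasurableSpace Ω] (P : Measure Ω) [IsProbabilityMeasure P]
    (p : PMF ℕ) (hsupp : p.support.Infinite)
    (hsum : ∑' i : ℕ, (p i / ∑' ℓ : ℕ, if i ≤ ℓ then p ℓ else 0) ^ 2 < ⊤)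
    (X : ℕ → Ω → ℕ) (hmeas : ∀ i, Measurable (X i))
    (hindep : iIndepFun X P)
    (hid : ∀ i, Measure.map (X i) P = p.toMeasure) :
    ∀ᵐ ω ∂P, ∃ K : ℕ, ∀ k ≥ K, recV X ω k < recV X ω (k + 1) := by
  classical
  have hPX : ∀ (j : ℕ) (A : Set ℕ), P (X j ⁻¹' A) = p.toMeasure A := by
    intro j A
    rw [← hid j, Measure.map_apply (hmeas j) .of_discrete]
  have hprod : ∀ (F : Finset ℕ) (A : ℕ → Set ℕ),
      P (⋂ j ∈ F, X j ⁻¹' A j) = ∏ j ∈ F, p.toMeasure (A j) := by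
    intro F A
    rw [hindep.meas_biInter (fun i _ => ⟨A i, .of_discrete, rfl⟩)]
    exact Finset.prod_congr rfl fun j _ => hPX j (A j)
  have hc_eq : ∀ i : ℕ, (∑' ℓ : ℕ, if i ≤ ℓ then p ℓ else 0)
      = p.toMeasure (Set.Ici i) := by
    intro i
    rw [PMF.toMeasure_apply _ .of_discrete]
    exact (tsum_congr fun ℓ => by simp [Set.indicator_apply, Set.mem_Ici]).symm
  have hcpos : ∀ i : ℕ, p.toMeasure (Set.Ici i) ≠ 0 := by
    intro i
    obtain ⟨m, hm, him⟩ := hsupp.exists_gt i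
    have hle : p.toMeasure {m} ≤ p.toMeasure (Set.Ici i) :=
      measure_mono (by simpa [Set.singleton_subset_iff, Set.mem_Ici] using him.le)
    rw [PMF.toMeasure_apply_singleton _ _ .of_discrete] at hle
    intro h0
    rw [h0, le_zero_iff] at hle
    exact (p.mem_support_iff m).1 hm hle
  have hsplit : ∀ i : ℕ, p.toMeasure (Set.Ici i)
      = p i + p.toMeasure (Set.Ici (i+1)) := by
    intro i
    have hins : Set.Ici i = {i} ∪ Set.Ici (i+1) := by
      ext x; simp only [Set.mem_Ici, Set.mem_union, Set.mem_singleton_iff]; omega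
    have hdis : Disjoint ({i} : Set ℕ) (Set.Ici (i+1)) := by
      simp only [Set.disjoint_left, Set.mem_singleton_iff, Set.mem_Ici]
      omega
    rw [hins, measure_union hdis .of_discrete,
      PMF.toMeasure_apply_singleton _ _ .of_discrete]
  have hcompl : ∀ i : ℕ, p.toMeasure (Set.Iic i) + p.toMeasure (Set.Ici (i+1)) = 1 := by
    intro i
    have h : Set.Ici (i+1) = (Set.Iic i)ᶜ := by
      ext x; simp only [Set.mem_Ici, Set.mem_compl_iff, Set.mem_Iic]; omega
    rw [h]
    exact prob_add_prob_compl .of_discrete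
  have hqlt : ∀ i : ℕ, p.toMeasure (Set.Iic i) < 1 := by
    intro i
    rcases lt_or_ge (p.toMeasure (Set.Iic i)) 1 with h | h
    · exact h
    · exfalso
      have hq1 : p.toMeasure (Set.Iic i) = 1 := le_antisymm prob_le_one h
      have := hcompl i
      rw [hq1] at this
      have h0 : p.toMeasure (Set.Ici (i+1)) = 0 := by
        have h1 : (1 : ℝ≥0∞) + p.toMeasure (Set.Ici (i+1)) = 1 + 0 := by
          rw [add_zero]; exact this
        exact (ENNReal.add_right_inj (by norm_num)).1 h1
      exact hcpos (i+1) h0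
  -- the probability of each elementary repeat event
  have hEv : ∀ i t s : ℕ, 1 ≤ t → t < s →
      P (Ev X i t s) = p i * p i * p.toMeasure (Set.Iic i) ^ (s - 2) := by
    intro i t s ht hts
    have hset : Ev X i t s = ⋂ j ∈ insert s (Finset.Ioo 0 s),
        X j ⁻¹' (if j = t ∨ j = s then {i} else Set.Iic i) := by
      ext ω
      simp only [Ev, Set.mem_setOf_eq, Set.mem_iInter, Finset.mem_insert, Finset.mem_Ioo]
      constructor
      · rintro ⟨h1, h2, h3⟩ j hj
        by_cases hjt : j = t ∨ j = s
        · rw [if_pos hjt]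
          rcases hjt with rfl | rfl
          · simpa using h1
          · simpa using h2
        · rw [if_neg hjt]
          push_neg at hjt
          rcases hj with rfl | ⟨hj0, hjs⟩
          · exact absurd rfl hjt.2
          · exact h3 j hj0 hjs
      · intro h
        have hts' := h t (Or.inr ⟨ht, hts⟩)
        rw [if_pos (Or.inl rfl)] at hts'
        have hss := h s (Or.inl rfl)
        rw [if_pos (Or.inr rfl)] at hss
        refine ⟨by simpa using hts', by simpa using hss, fun j hj1 hjs => ?_⟩
        have hjmem := h j (Or.inr ⟨hj1, hjs⟩)
        by_cases hjt : j = t ∨ j = s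
        · rw [if_pos hjt] at hjmem
          simp only [Set.mem_preimage, Set.mem_singleton_iff] at hjmem
          simp [hjmem]
        · rw [if_neg hjt] at hjmem
          simpa using hjmem
    rw [hset, hprod]
    have hsnot : s ∉ Finset.Ioo 0 s := by simp
    rw [Finset.prod_insert hsnot]
    have htmem : t ∈ Finset.Ioo 0 s := by
      simp only [Finset.mem_Ioo]; omega
    rw [← Finset.mul_prod_erase _ _ htmem]
    have h1 : p.toMeasure (if s = t ∨ s = s then ({i} : Set ℕ) else Set.Iic i) = p i := by
      rw [if_pos (Or.inr rfl), PMF.toMeasure_apply_singleton _ _ .of_discrete]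
    have h2 : p.toMeasure (if t = t ∨ t = s then ({i} : Set ℕ) else Set.Iic i) = p i := by
      rw [if_pos (Or.inl rfl), PMF.toMeasure_apply_singleton _ _ .of_discrete]
    rw [h1, h2]
    have h3 : ∀ j ∈ (Finset.Ioo 0 s).erase t,
        p.toMeasure (if j = t ∨ j = s then ({i} : Set ℕ) else Set.Iic i)
          = p.toMeasure (Set.Iic i) := by
      intro j hj
      have hjt := Finset.ne_of_mem_erase hj
      have hjmem := Finset.mem_of_mem_erase hj
      simp only [Finset.mem_Ioo] at hjmem
      have hjs : j ≠ s := by omega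
      rw [if_neg (by tauto)]
    rw [Finset.prod_congr rfl h3, Finset.prod_const]
    have hcard : ((Finset.Ioo 0 s).erase t).card = s - 2 := by
      rw [Finset.card_erase_of_mem htmem, Nat.card_Ioo]
      omega
    rw [hcard, ← mul_assoc]
  -- union bound for Cset
  have hCsub : ∀ i : ℕ, Cset X i ⊆
      ⋃ t, ⋃ s, (if 1 ≤ t ∧ t < s then Ev X i t s else ∅) := by
    rintro i ω ⟨t, s, ht, hts, hmem⟩
    exact Set.mem_iUnion.2 ⟨t, Set.mem_iUnion.2 ⟨s, by rw [if_pos ⟨ht, hts⟩]; exact hmem⟩⟩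
  have hinner : ∀ i t : ℕ, 1 ≤ t →
      ∑' s, P (if 1 ≤ t ∧ t < s then Ev X i t s else ∅)
        = p i * p i * p.toMeasure (Set.Iic i) ^ (t - 1)
          * (1 - p.toMeasure (Set.Iic i))⁻¹ := by
    intro i t ht
    have hshift : ∑' s, P (if 1 ≤ t ∧ t < s then Ev X i t s else ∅)
        = ∑' v : ℕ, P (if 1 ≤ t ∧ t < (v + (t+1)) then Ev X i t (v + (t+1)) else ∅) := by
      refine (Function.Injective.tsum_eq (g := fun v : ℕ => v + (t+1))
        (fun a b h => by simpa using h) ?_).symm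
      intro s hs
      rw [Set.mem_range]
      by_contra hno
      push_neg at hno
      apply hs
      have hst : ¬ t < s := by
        intro h
        exact hno (s - (t+1)) (by omega)
      show P (if 1 ≤ t ∧ t < s then Ev X i t s else ∅) = 0
      rw [if_neg (by tauto), measure_empty]
    rw [hshift]
    have hterm : ∀ v : ℕ, P (if 1 ≤ t ∧ t < (v + (t+1)) then Ev X i t (v + (t+1)) else ∅)
        = (p i * p i * p.toMeasure (Set.Iic i) ^ (t-1)) * p.toMeasure (Set.Iic i) ^ v := by
      intro v
      rw [if_pos ⟨ht, by omega⟩, hEv i t (v + (t+1)) ht (by omega)]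
      have hvt : v + (t+1) - 2 = (t - 1) + v := by omega
      rw [hvt, pow_add]
      ring
    rw [tsum_congr hterm, ENNReal.tsum_mul_left, ENNReal.tsum_geometric]
  have houter : ∀ i : ℕ, ∑' t, ∑' s, P (if 1 ≤ t ∧ t < s then Ev X i t s else ∅)
      = p i ^ 2 * ((1 - p.toMeasure (Set.Iic i))⁻¹) ^ 2 := by
    intro i
    have hshift : ∑' t, (∑' s, P (if 1 ≤ t ∧ t < s then Ev X i t s else ∅))
        = ∑' u : ℕ, ∑' s, P (if 1 ≤ u + 1 ∧ u + 1 < s then Ev X i (u+1) s else ∅) := by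
      refine (Function.Injective.tsum_eq (g := fun u : ℕ => u + 1)
        (fun a b h => by simpa using h) ?_).symm
      intro t htne
      rw [Set.mem_range]
      by_contra hno
      push_neg at hno
      apply htne
      have ht0 : t = 0 := by
        rcases t with - | u
        · rfl
        · exact absurd rfl (hno u)
      subst ht0
      show (∑' s, P (if 1 ≤ 0 ∧ 0 < s then Ev X 0 0 s else ∅)) = 0
      simp
    rw [hshift]
    have hterm : ∀ u : ℕ, ∑' s, P (if 1 ≤ u + 1 ∧ u + 1 < s then Ev X i (u+1) s else ∅)
        = (p i * p i * (1 - p.toMeasure (Set.Iic i))⁻¹) * p.toMeasure (Set.Iic i) ^ u := by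
      intro u
      rw [hinner i (u+1) (Nat.le_add_left 1 u), Nat.add_sub_cancel]
      ring
    rw [tsum_congr hterm, ENNReal.tsum_mul_left, ENNReal.tsum_geometric]
    ring
  have hCbound : ∀ i : ℕ, P (Cset X i)
      ≤ p i ^ 2 * ((1 - p.toMeasure (Set.Iic i))⁻¹) ^ 2 := by
    intro i
    refine le_trans (measure_mono (hCsub i)) ?_
    refine le_trans (measure_iUnion_le _) ?_
    refine le_trans (ENNReal.tsum_le_tsum fun t => measure_iUnion_le _) ?_
    exact le_of_eq (houter i)
  -- summability
  have hr : ∑' i : ℕ, (p i / p.toMeasure (Set.Ici i)) ^ 2 ≠ ∞ := by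
    simp_rw [hc_eq] at hsum
    exact hsum.ne
  have hbadfin : {i : ℕ | (1:ℝ≥0∞)/4 ≤ (p i / p.toMeasure (Set.Ici i)) ^ 2}.Finite :=
    ENNReal.finite_const_le_of_tsum_ne_top hr (by norm_num)
  have hgood : ∀ i : ℕ, ¬ ((1:ℝ≥0∞)/4 ≤ (p i / p.toMeasure (Set.Ici i)) ^ 2) →
      P (Cset X i) ≤ 4 * (p i / p.toMeasure (Set.Ici i)) ^ 2 := by
    intro i hi
    have hclt : p.toMeasure (Set.Ici i) ≠ ∞ :=
      (prob_le_one.trans_lt ENNReal.one_lt_top).ne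
    have hhalf : p i / p.toMeasure (Set.Ici i) < 1/2 := by
      by_contra h
      push_neg at h
      refine hi ?_
      calc (1:ℝ≥0∞)/4 = (1/2) * (1/2) := by
            rw [ENNReal.div_eq_inv_mul, mul_one,
              (by norm_num : (4:ℝ≥0∞) = 2 * 2),
              ENNReal.mul_inv (Or.inl (by norm_num)) (Or.inl (by norm_num)), one_div]
        _ ≤ (p i / p.toMeasure (Set.Ici i)) * (p i / p.toMeasure (Set.Ici i)) :=
            mul_le_mul' h h
        _ = (p i / p.toMeasure (Set.Ici i)) ^ 2 := (sq _).symm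
    have hplt : p i < 1/2 * p.toMeasure (Set.Ici i) := by
      have := (ENNReal.div_lt_iff (Or.inl (hcpos i)) (Or.inl hclt)).1 hhalf
      exact this
    have h2p : 2 * p i < p.toMeasure (Set.Ici i) := by
      have hmul : 2 * p i < 2 * (1/2 * p.toMeasure (Set.Ici i)) :=
        (ENNReal.mul_lt_mul_iff_right (by norm_num) (by norm_num)).2 hplt
      calc 2 * p i < 2 * (1/2 * p.toMeasure (Set.Ici i)) := hmul
        _ = p.toMeasure (Set.Ici i) := by
            rw [one_div, ← mul_assoc, ENNReal.mul_inv_cancel (by norm_num) (by norm_num),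
              one_mul]
    have hpc' : p i ≤ p.toMeasure (Set.Ici (i+1)) := by
      by_contra h
      push_neg at h
      have hlt : p.toMeasure (Set.Ici i) < 2 * p i := by
        rw [hsplit i, two_mul]
        exact ENNReal.add_lt_add_left (by simp [PMF.apply_ne_top]) h
      exact absurd (hlt.trans h2p) (lt_irrefl _)
    have hcc : p.toMeasure (Set.Ici i) ≤ 2 * p.toMeasure (Set.Ici (i+1)) := by
      rw [hsplit i, two_mul]
      exact add_le_add_left hpc' _
    have hinv : (p.toMeasure (Set.Ici (i+1)))⁻¹ ≤ 2 * (p.toMeasure (Set.Ici i))⁻¹ := by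
      have h1 : (2 * p.toMeasure (Set.Ici (i+1)))⁻¹ ≤ (p.toMeasure (Set.Ici i))⁻¹ :=
        ENNReal.inv_le_inv' hcc
      have h2 : (2 * p.toMeasure (Set.Ici (i+1)))⁻¹
          = 2⁻¹ * (p.toMeasure (Set.Ici (i+1)))⁻¹ :=
        ENNReal.mul_inv (Or.inl (by norm_num)) (Or.inl (by norm_num))
      calc (p.toMeasure (Set.Ici (i+1)))⁻¹
          = 2 * (2⁻¹ * (p.toMeasure (Set.Ici (i+1)))⁻¹) := by
            rw [← mul_assoc, ENNReal.mul_inv_cancel (by norm_num) (by norm_num), one_mul]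
        _ ≤ 2 * (p.toMeasure (Set.Ici i))⁻¹ := mul_le_mul_right (h2 ▸ h1) 2
    have hsubq : (1:ℝ≥0∞) - p.toMeasure (Set.Iic i) = p.toMeasure (Set.Ici (i+1)) :=
      ENNReal.sub_eq_of_eq_add (prob_le_one.trans_lt ENNReal.one_lt_top).ne
        (by rw [← hcompl i, add_comm])
    calc P (Cset X i)
        ≤ p i ^ 2 * ((1 - p.toMeasure (Set.Iic i))⁻¹) ^ 2 := hCbound i
      _ = p i ^ 2 * ((p.toMeasure (Set.Ici (i+1)))⁻¹) ^ 2 := by rw [hsubq]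
      _ ≤ p i ^ 2 * (2 * (p.toMeasure (Set.Ici i))⁻¹) ^ 2 := by gcongr
      _ = 4 * (p i / p.toMeasure (Set.Ici i)) ^ 2 := by
          rw [div_eq_mul_inv]; ring
  have htot : ∑' i : ℕ, P (Cset X i) ≠ ∞ := by
    have hle : ∀ i : ℕ, P (Cset X i) ≤
        Set.indicator {i : ℕ | (1:ℝ≥0∞)/4 ≤ (p i / p.toMeasure (Set.Ici i)) ^ 2}
          (fun _ => 1) i + 4 * (p i / p.toMeasure (Set.Ici i)) ^ 2 := by
      intro i
      by_cases hi : (1:ℝ≥0∞)/4 ≤ (p i / p.toMeasure (Set.Ici i)) ^ 2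
      · have him : i ∈ {i : ℕ | (1:ℝ≥0∞)/4 ≤ (p i / p.toMeasure (Set.Ici i)) ^ 2} := hi
        rw [Set.indicator_of_mem him]
        exact prob_le_one.trans le_self_add
      · have him : i ∉ {i : ℕ | (1:ℝ≥0∞)/4 ≤ (p i / p.toMeasure (Set.Ici i)) ^ 2} := hi
        rw [Set.indicator_of_notMem him, zero_add]
        exact hgood i hi
    refine ne_of_lt (lt_of_le_of_lt (ENNReal.tsum_le_tsum hle) ?_)
    rw [ENNReal.tsum_add]
    refine ENNReal.add_lt_top.2 ⟨?_, ?_⟩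
    · have heq : ∑' i : ℕ, Set.indicator
          {i : ℕ | (1:ℝ≥0∞)/4 ≤ (p i / p.toMeasure (Set.Ici i)) ^ 2} (fun _ => (1:ℝ≥0∞)) i
          = ∑ i ∈ hbadfin.toFinset, Set.indicator
          {i : ℕ | (1:ℝ≥0∞)/4 ≤ (p i / p.toMeasure (Set.Ici i)) ^ 2} (fun _ => (1:ℝ≥0∞)) i := by
        refine tsum_eq_sum ?_
        intro i hi
        exact Set.indicator_of_notMem (by simpa using hi) _
      rw [heq]
      refine ENNReal.sum_lt_top.2 fun i _ => lt_of_le_of_lt ?_ ENNReal.one_lt_top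
      by_cases hi : i ∈ {i : ℕ | (1:ℝ≥0∞)/4 ≤ (p i / p.toMeasure (Set.Ici i)) ^ 2}
      · rw [Set.indicator_of_mem hi]
      · rw [Set.indicator_of_notMem hi]
        exact zero_le_one
    · rw [ENNReal.tsum_mul_left]
      exact ENNReal.mul_lt_top (by norm_num) (lt_of_le_of_ne le_top hr)
  have hBC : ∀ᵐ ω ∂P, ∀ᶠ (i : ℕ) in atTop, ω ∉ Cset X i := by
    have h0 := measure_setOf_frequently_eq_zero (μ := P)
      (p := fun i ω => ω ∈ Cset X i) htot
    rw [ae_iff]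
    have hsetid : {ω | ¬ ∀ᶠ (i : ℕ) in atTop, ω ∉ Cset X i}
        = {ω | ∃ᶠ (i : ℕ) in atTop, ω ∈ Cset X i} := by
      ext ω
      simp [Filter.not_eventually, Filter.frequently_atTop]
    rw [hsetid]
    exact h0
  have hH : ∀ᵐ ω ∂P, ∀ n v : ℕ, ∃ i, n < i ∧ v < X i ω := by
    rw [ae_all_iff]
    intro n
    rw [ae_all_iff]
    intro v
    rw [ae_iff]
    have hsub : ∀ k : ℕ, {ω | ¬ ∃ i, n < i ∧ v < X i ω} ⊆
        ⋂ j ∈ Finset.Ioc n (n+k), X j ⁻¹' Set.Iic v := by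
      intro k ω hω
      simp only [Set.mem_setOf_eq, not_exists, not_and, not_lt] at hω
      simp only [Set.mem_iInter, Finset.mem_Ioc, Set.mem_preimage, Set.mem_Iic]
      exact fun j hj => hω j hj.1
    have hb : ∀ k : ℕ, P {ω | ¬ ∃ i, n < i ∧ v < X i ω} ≤ p.toMeasure (Set.Iic v) ^ k := by
      intro k
      refine (measure_mono (hsub k)).trans ?_
      rw [hprod, Finset.prod_const, Nat.card_Ioc, Nat.add_sub_cancel_left]
    have htend : Tendsto (fun k => p.toMeasure (Set.Iic v) ^ k) atTop (nhds 0) := by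
      refine ENNReal.tendsto_atTop_zero_of_tsum_ne_top ?_
      rw [ENNReal.tsum_geometric]
      refine ENNReal.inv_ne_top.2 ?_
      intro h0
      exact absurd (tsub_eq_zero_iff_le.1 h0) (not_le.2 (hqlt v))
    exact le_antisymm (ge_of_tendsto' htend hb) zero_le
  filter_upwards [hBC, hH] with ω h1 h2
  obtain ⟨M, hM⟩ := eventually_atTop.1 h1
  exact det_lemma X ω h2 M hM
end

section
/- The probability measure p on ℕ defined by p(n) = c·(n+1)^{-2}, where c = 6/π² is the normalizing constant, has eventually simple records: if (X_i)_{i≥1} are i.i.d. with law p, and (R_k) is the sequence of record values, then almost surely R_{k+1} > R_k for all sufficiently large k. Moreover p(n) > 0 for all n. -/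
open MeasureTheory ProbabilityTheory Filter
open scoped ENNReal

section Det
variable {Ω : Type*} (X : ℕ → Ω → ℕ) (ω : Ω)

lemma recT_succ (k : ℕ) :
    recT X ω (k+1) = sInf {i : ℕ | recT X ω k < i ∧ ∀ j, 1 ≤ j → j < i → X j ω ≤ X i ω} := rfl

lemma rec_nonempty (hub : ∀ n : ℕ, ∃ i, 1 ≤ i ∧ n < X i ω) (t : ℕ) :
    {i : ℕ | t < i ∧ ∀ j, 1 ≤ j → j < i → X j ω ≤ X i ω}.Nonempty := by
  obtain ⟨T, hT1, hTgt⟩ := hub ((Finset.range (t+1)).sup (fun j => X j ω))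
  have htT : t < T := by
    by_contra h
    push_neg at h
    exact absurd (Finset.le_sup (f := fun j => X j ω)
      (Finset.mem_range.mpr (Nat.lt_succ_of_le h))) (not_le.mpr hTgt)
  obtain ⟨i, hi_mem, hi_max⟩ := Finset.exists_max_image (Finset.Ioc t T) (fun j => X j ω)
    ⟨T, Finset.mem_Ioc.mpr ⟨htT, le_rfl⟩⟩
  rw [Finset.mem_Ioc] at hi_mem
  refine ⟨i, hi_mem.1, fun j hj1 hji => ?_⟩
  rcases le_or_gt j t with hjt | hjt
  · calc X j ω ≤ (Finset.range (t+1)).sup (fun j => X j ω) :=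
        Finset.le_sup (f := fun j => X j ω) (Finset.mem_range.mpr (Nat.lt_succ_of_le hjt))
      _ ≤ X T ω := le_of_lt hTgt
      _ ≤ X i ω := hi_max T (Finset.mem_Ioc.mpr ⟨htT, le_rfl⟩)
  · exact hi_max j (Finset.mem_Ioc.mpr ⟨hjt, le_trans (le_of_lt hji) hi_mem.2⟩)

lemma recT_mem (hub : ∀ n : ℕ, ∃ i, 1 ≤ i ∧ n < X i ω) (k : ℕ) :
    recT X ω k < recT X ω (k+1) ∧
      ∀ j, 1 ≤ j → j < recT X ω (k+1) → X j ω ≤ X (recT X ω (k+1)) ω := by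
  rw [recT_succ]
  exact Nat.sInf_mem (rec_nonempty X ω hub _)

lemma one_le_recT (hub : ∀ n : ℕ, ∃ i, 1 ≤ i ∧ n < X i ω) (k : ℕ) : 1 ≤ recT X ω k := by
  induction k with
  | zero => exact le_refl 1
  | succ k ih => exact le_trans ih (le_of_lt (recT_mem X ω hub k).1)

lemma recT_record (hub : ∀ n : ℕ, ∃ i, 1 ≤ i ∧ n < X i ω) (k : ℕ) :
    ∀ j, 1 ≤ j → j < recT X ω k → X j ω ≤ X (recT X ω k) ω := by
  cases k with
  | zero => intro j h1 h2; simp only [recT] at h2; omega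
  | succ k => exact (recT_mem X ω hub k).2

lemma recV_mono (hub : ∀ n : ℕ, ∃ i, 1 ≤ i ∧ n < X i ω) : Monotone (recV X ω) := by
  apply monotone_nat_of_le_succ
  intro k
  exact recT_record X ω hub (k+1) (recT X ω k) (one_le_recT X ω hub k) (recT_mem X ω hub k).1

lemma lt_recT (hub : ∀ n : ℕ, ∃ i, 1 ≤ i ∧ n < X i ω) (k : ℕ) : k < recT X ω k := by
  induction k with
  | zero => exact one_le_recT X ω hub 0
  | succ k ih => exact lt_of_le_of_lt ih (recT_mem X ω hub k).1

lemma recV_unbounded (hub : ∀ n : ℕ, ∃ i, 1 ≤ i ∧ n < X i ω) (N : ℕ) :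
    ∃ k, N < recV X ω k := by
  obtain ⟨i, hi1, hiN⟩ := hub N
  refine ⟨i, lt_of_lt_of_le hiN ?_⟩
  exact recT_record X ω hub i i hi1 (lt_recT X ω hub i)

lemma det_main (hub : ∀ n : ℕ, ∃ i, 1 ≤ i ∧ n < X i ω) (N : ℕ)
    (hB : ∀ n, N ≤ n → ¬ ∃ j i, 1 ≤ i ∧ i < j ∧ X i ω = n ∧ X j ω = n ∧
      ∀ m, 1 ≤ m → m < j → X m ω ≤ n) :
    ∃ K : ℕ, ∀ k ≥ K, recV X ω k < recV X ω (k + 1) := by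
  obtain ⟨k0, hk0⟩ := recV_unbounded X ω hub N
  refine ⟨k0, fun k hk => ?_⟩
  by_contra hcon
  have hle : recV X ω k ≤ recV X ω (k+1) := recV_mono X ω hub (Nat.le_succ k)
  have heq : recV X ω k = recV X ω (k+1) := le_antisymm hle (not_lt.mp hcon)
  set n := recV X ω k with hn
  have hNn : N ≤ n := le_trans (le_of_lt hk0) (recV_mono X ω hub hk)
  refine hB n hNn ⟨recT X ω (k+1), recT X ω k, one_le_recT X ω hub k,
    (recT_mem X ω hub k).1, rfl, heq.symm, fun m h1 h2 => ?_⟩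
  calc X m ω ≤ X (recT X ω (k+1)) ω := recT_record X ω hub (k+1) m h1 h2
    _ = n := heq.symm

end Det

/-- the measure `p(n) = (6/π²)·(n+1)⁻²` on ℕ is everywhere positive and
has eventually simple records: if `(X_i)` are i.i.d. with law `p` then almost surely
`R_{k+1} > R_k` for all sufficiently large `k`. -/
theorem eventually_simple_records_of_quadratic_tail
    {Ω : Type*} [MeasurableSpace Ω] (P : Measure Ω) [IsProbabilityMeasure P]
    (X : ℕ → Ω → ℕ) (hmeas : ∀ i, Measurable (X i))
    (hindep : iIndepFun X P)
    (hid : ∀ i n, P {ω | X i ω = n} = ENNReal.ofReal (6 / Real.pi ^ 2 * (((n : ℝ) + 1) ^ 2)⁻¹)) :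
    (∀ n : ℕ, 0 < 6 / Real.pi ^ 2 * (((n : ℝ) + 1) ^ 2)⁻¹) ∧
    ∀ᵐ ω ∂P, ∃ K : ℕ, ∀ k ≥ K, recV X ω k < recV X ω (k + 1) := by
  classical
  have hπ : (0:ℝ) < Real.pi ^ 2 := pow_pos Real.pi_pos 2
  set c : ℝ := 6 / Real.pi ^ 2 with hc_def
  have hc : 0 < c := div_pos (by norm_num) hπ
  set p : ℕ → ℝ := fun n => c * (((n : ℝ) + 1) ^ 2)⁻¹ with hp_def
  have hppos : ∀ n, 0 < p n := fun n => mul_pos hc (inv_pos.mpr (by positivity))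
  refine ⟨hppos, ?_⟩
  -- singleton measures
  have hsing : ∀ i n, P (X i ⁻¹' {n}) = ENNReal.ofReal (p n) := fun i n => hid i n
  set Fr : ℕ → ℝ := fun n => ∑ k ∈ Finset.range (n+1), p k with hFr_def
  have hFr_nonneg : ∀ n, 0 ≤ Fr n := fun n => Finset.sum_nonneg fun k _ => (hppos k).le
  have hIic : ∀ i n, P (X i ⁻¹' Set.Iic n) = ENNReal.ofReal (Fr n) := by
    intro i n
    have hU : X i ⁻¹' Set.Iic n = ⋃ k ∈ Finset.range (n+1), X i ⁻¹' {k} := by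
      ext ω'
      simp [Nat.lt_succ_iff]
    rw [hU, measure_biUnion_finset ?_ (fun k _ => (hmeas i) (measurableSet_singleton k))]
    · rw [Finset.sum_congr rfl (fun k _ => hsing i k)]
      rw [hFr_def, ENNReal.ofReal_sum_of_nonneg (fun k _ => (hppos k).le)]
    · intro a _ b _ hab
      exact Set.disjoint_left.mpr fun ω' ha hb => hab (by
        simp only [Set.mem_preimage, Set.mem_singleton_iff] at ha hb; omega)
  have hFr_le_one : ∀ n, Fr n ≤ 1 := by
    intro n
    have h1 : ENNReal.ofReal (Fr n) ≤ 1 := by rw [← hIic 0 n]; exact prob_le_one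
    exact ENNReal.ofReal_le_one.mp h1
  -- key tail bound : Fr n + c/(n+2) ≤ 1
  have htel : ∀ n K : ℕ, Fr n + (c * ((n:ℝ)+2)⁻¹ - c * ((n:ℝ)+2+K)⁻¹) ≤ Fr (n+K) := by
    intro n K
    induction K with
    | zero => simp
    | succ K ih =>
      have hFrsucc : Fr (n+(K+1)) = Fr (n+K) + p (n+K+1) := by
        rw [hFr_def]
        show ∑ k ∈ Finset.range (n+K+1+1), p k = _
        rw [Finset.sum_range_succ]
      have ha : (0:ℝ) < (n:ℝ)+2+K := by positivity
      have hb : (0:ℝ) < (n:ℝ)+2+(K+1) := by positivity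
      have hstep : c * ((n:ℝ)+2+K)⁻¹ - c * ((n:ℝ)+2+(K+1))⁻¹ ≤ p (n+K+1) := by
        have he : ((n:ℝ)+2+K)⁻¹ - ((n:ℝ)+2+(K+1))⁻¹
            = (((n:ℝ)+2+K) * ((n:ℝ)+2+(K+1)))⁻¹ := by
          rw [inv_sub_inv (ne_of_gt ha) (ne_of_gt hb)]
          rw [show ((n:ℝ)+2+(K+1)) - ((n:ℝ)+2+K) = 1 by ring]
          rw [one_div]
        have hple : (((n:ℝ)+2+K) * ((n:ℝ)+2+(K+1)))⁻¹ ≤ ((((n+K+1:ℕ):ℝ)+1)^2)⁻¹ := by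
          apply inv_anti₀ (by positivity)
          push_cast
          nlinarith
        calc c * ((n:ℝ)+2+K)⁻¹ - c * ((n:ℝ)+2+(K+1))⁻¹
            = c * (((n:ℝ)+2+K)⁻¹ - ((n:ℝ)+2+(K+1))⁻¹) := by ring
          _ = c * (((n:ℝ)+2+K) * ((n:ℝ)+2+(K+1)))⁻¹ := by rw [he]
          _ ≤ c * ((((n+K+1:ℕ):ℝ)+1)^2)⁻¹ := by
              exact mul_le_mul_of_nonneg_left hple hc.le
          _ = p (n+K+1) := rfl
      have : Fr n + (c * ((n:ℝ)+2)⁻¹ - c * ((n:ℝ)+2+(K+1):ℝ)⁻¹) ≤ Fr (n+K) + p (n+K+1) := by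
        push_cast at ih hstep ⊢
        linarith
      rw [hFrsucc]
      convert this using 3
      push_cast
      ring
  have hkey : ∀ n : ℕ, Fr n + c * ((n:ℝ)+2)⁻¹ ≤ 1 := by
    intro n
    have htend : Tendsto (fun K : ℕ => Fr n + (c * ((n:ℝ)+2)⁻¹ - c * ((n:ℝ)+2+K)⁻¹)) atTop
        (nhds (Fr n + (c * ((n:ℝ)+2)⁻¹ - c * 0))) := by
      apply Tendsto.add tendsto_const_nhds
      apply Tendsto.sub tendsto_const_nhds
      apply Tendsto.const_mul
      exact Tendsto.inv_tendsto_atTop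
        (tendsto_atTop_add_const_left _ _ tendsto_natCast_atTop_atTop)
    have hle := le_of_tendsto' htend (fun K => le_trans (htel n K) (hFr_le_one (n+K)))
    simpa using hle
  have hFrlt : ∀ n, Fr n < 1 := fun n =>
    lt_of_lt_of_le (lt_add_of_pos_right _ (by positivity)) (hkey n)
  -- the bad events
  set Bset : ℕ → Set Ω := fun n => {ω | ∃ j i, 1 ≤ i ∧ i < j ∧ X i ω = n ∧ X j ω = n ∧
      ∀ m, 1 ≤ m → m < j → X m ω ≤ n} with hBset_def
  set E : ℕ → ℕ → ℕ → Set Ω := fun n i j =>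
    ⋂ m ∈ Finset.Ico 1 (j+1), X m ⁻¹' (if m = i ∨ m = j then ({n} : Set ℕ) else Set.Iic n)
    with hE_def
  have hEmeasure : ∀ n i j, 1 ≤ i → i < j →
      P (E n i j) = ENNReal.ofReal (p n) ^ 2 * ENNReal.ofReal (Fr n) ^ (j-2) := by
    intro n i j hi hij
    rw [hE_def]
    rw [hindep.meas_biInter (fun m _ => ⟨_, trivial, rfl⟩)]
    have hcongr : ∀ m ∈ Finset.Ico 1 (j+1),
        P (X m ⁻¹' (if m = i ∨ m = j then ({n} : Set ℕ) else Set.Iic n)) =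
          (if m = i ∨ m = j then ENNReal.ofReal (p n) else ENNReal.ofReal (Fr n)) := by
      intro m _
      split_ifs
      · exact hsing m n
      · exact hIic m n
    rw [Finset.prod_congr rfl hcongr, Finset.prod_ite, Finset.prod_const, Finset.prod_const]
    have hfil : (Finset.Ico 1 (j+1)).filter (fun m => m = i ∨ m = j) = {i, j} := by
      ext m
      simp only [Finset.mem_filter, Finset.mem_Ico, Finset.mem_insert, Finset.mem_singleton]
      omega
    have hcard1 : ((Finset.Ico 1 (j+1)).filter (fun m => m = i ∨ m = j)).card = 2 := by
      rw [hfil]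
      rw [Finset.card_insert_of_notMem (by simp; omega), Finset.card_singleton]
    have hcardtot := Finset.card_filter_add_card_filter_not
      (s := Finset.Ico 1 (j+1)) (p := fun m => m = i ∨ m = j)
    rw [Nat.card_Ico] at hcardtot
    have hcard2 : ((Finset.Ico 1 (j+1)).filter (fun m => ¬(m = i ∨ m = j))).card = j - 2 := by
      omega
    rw [hcard1, hcard2]
  -- bound on P (Bset n)
  set g : ℕ → ℝ := fun n => p n ^ 2 * (((n:ℝ)+2)/c)^2 with hg_def
  have hBbound : ∀ n, P (Bset n) ≤ ENNReal.ofReal (g n) := by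
    intro n
    have hsub : Bset n ⊆ ⋃ (j : ℕ), ⋃ (i : ℕ),
        (if 1 ≤ i ∧ i < j then E n i j else ∅) := by
      intro ω' hω'
      obtain ⟨j, i, h1, h2, hXi, hXj, hall⟩ := hω'
      refine Set.mem_iUnion.mpr ⟨j, Set.mem_iUnion.mpr ⟨i, ?_⟩⟩
      rw [if_pos ⟨h1, h2⟩, hE_def]
      refine Set.mem_iInter₂.mpr fun m hm => ?_
      rw [Finset.mem_Ico] at hm
      by_cases hmij : m = i ∨ m = j
      · rw [if_pos hmij]
        rcases hmij with h | h
        · subst h; exact hXi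
        · subst h; exact hXj
      · rw [if_neg hmij]
        push_neg at hmij
        exact hall m hm.1 (by omega)
    have hinner : ∀ j : ℕ, (∑' i : ℕ, P (if 1 ≤ i ∧ i < j then E n i j else ∅))
        = ((j-1 : ℕ) : ℝ≥0∞) * (ENNReal.ofReal (p n) ^ 2 * ENNReal.ofReal (Fr n) ^ (j-2)) := by
      intro j
      rw [tsum_eq_sum (s := Finset.Ico 1 j) (fun i hi => by
        rw [Finset.mem_Ico] at hi
        push_neg at hi
        rw [if_neg (by omega), measure_empty])]
      have hc2 : ∑ i ∈ Finset.Ico 1 j, P (if 1 ≤ i ∧ i < j then E n i j else ∅)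
          = ∑ _i ∈ Finset.Ico 1 j,
              (ENNReal.ofReal (p n) ^ 2 * ENNReal.ofReal (Fr n) ^ (j-2)) := by
        refine Finset.sum_congr rfl (fun i hi => ?_)
        rw [Finset.mem_Ico] at hi
        rw [if_pos ⟨hi.1, hi.2⟩, hEmeasure n i j hi.1 hi.2]
      rw [hc2, Finset.sum_const, Nat.card_Ico, nsmul_eq_mul]
    calc P (Bset n) ≤ ∑' j : ℕ, P (⋃ i : ℕ, (if 1 ≤ i ∧ i < j then E n i j else ∅)) :=
          le_trans (measure_mono hsub) (measure_iUnion_le _)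
      _ ≤ ∑' j : ℕ, ∑' i : ℕ, P (if 1 ≤ i ∧ i < j then E n i j else ∅) :=
          ENNReal.tsum_le_tsum (fun j => measure_iUnion_le _)
      _ = ∑' j : ℕ, ((j-1 : ℕ) : ℝ≥0∞) * (ENNReal.ofReal (p n) ^ 2
            * ENNReal.ofReal (Fr n) ^ (j-2)) := by
          exact tsum_congr hinner
      _ ≤ ENNReal.ofReal (g n) := by
          set r := Fr n with hr_def
          have h0 : 0 ≤ r := hFr_nonneg n
          have h1 : r < 1 := hFrlt n
          have h1r : (0:ℝ) < 1 - r := by linarith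
          have hg1 : HasSum (fun m : ℕ => (m:ℝ) * r^m) (r/(1-r)^2) :=
            hasSum_coe_mul_geometric_of_norm_lt_one
              (by rwa [Real.norm_eq_abs, abs_of_nonneg h0])
          have hg2 : HasSum (fun m : ℕ => r^m) ((1-r)⁻¹) := hasSum_geometric_of_lt_one h0 h1
          have hg3 : HasSum (fun m : ℕ => ((m:ℝ)+1) * r^m) (r/(1-r)^2 + (1-r)⁻¹) := by
            have := hg1.add hg2
            convert this using 2 with m
            ring
          have hg4 : HasSum (fun m : ℕ => p n ^ 2 * (((m:ℝ)+1) * r^m))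
              (p n ^ 2 * (r/(1-r)^2 + (1-r)⁻¹)) := hg3.mul_left _
          set f : ℕ → ℝ≥0∞ := fun j =>
            ((j-1 : ℕ) : ℝ≥0∞) * (ENNReal.ofReal (p n) ^ 2 * ENNReal.ofReal r ^ (j-2))
            with hf_def
          have hshift : (∑' j : ℕ, f j) = ∑' m : ℕ, f (m+1+1) := by
            rw [tsum_eq_zero_add' ENNReal.summable, tsum_eq_zero_add' ENNReal.summable]
            norm_num [hf_def]
          have hval : ∀ m : ℕ, f (m+1+1) = ENNReal.ofReal (p n ^ 2 * (((m:ℝ)+1) * r^m)) := by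
            intro m
            have e1 : (m+1+1-1 : ℕ) = m+1 := rfl
            have e2 : (m+1+1-2 : ℕ) = m := rfl
            simp only [hf_def, e1, e2]
            rw [ENNReal.ofReal_mul (sq_nonneg (p n)),
              ENNReal.ofReal_mul (by positivity : (0:ℝ) ≤ (m:ℝ)+1),
              ENNReal.ofReal_pow h0, ENNReal.ofReal_pow (hppos n).le,
              show ((m:ℝ)+1) = ((m+1 : ℕ) : ℝ) by push_cast; ring, ENNReal.ofReal_natCast]
            ring
          have hsum_le : p n ^ 2 * (r/(1-r)^2 + (1-r)⁻¹) ≤ g n := by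
            have hv : r/(1-r)^2 + (1-r)⁻¹ = ((1-r)^2)⁻¹ := by
              field_simp
              ring
            rw [hv]
            have hbound : c * ((n:ℝ)+2)⁻¹ ≤ 1 - r := by
              have := hkey n
              rw [← hr_def] at this
              linarith
            have hposc : (0:ℝ) < c * ((n:ℝ)+2)⁻¹ := by positivity
            have h2 : (c * ((n:ℝ)+2)⁻¹)^2 ≤ (1-r)^2 := by nlinarith
            have h3 : ((1-r)^2)⁻¹ ≤ ((c * ((n:ℝ)+2)⁻¹)^2)⁻¹ :=
              inv_anti₀ (by positivity) h2
            have h4 : ((c * ((n:ℝ)+2)⁻¹)^2)⁻¹ = (((n:ℝ)+2)/c)^2 := by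
              rw [mul_pow]
              field_simp
            have h5 : p n ^ 2 * ((1-r)^2)⁻¹ ≤ p n ^ 2 * (((n:ℝ)+2)/c)^2 := by
              rw [← h4]
              exact mul_le_mul_of_nonneg_left h3 (by positivity)
            simpa [hg_def] using h5
          calc (∑' j : ℕ, f j) = ∑' m : ℕ, f (m+1+1) := hshift
            _ = ∑' m : ℕ, ENNReal.ofReal (p n ^ 2 * (((m:ℝ)+1) * r^m)) := tsum_congr hval
            _ = ENNReal.ofReal (∑' m : ℕ, p n ^ 2 * (((m:ℝ)+1) * r^m)) :=
                (ENNReal.ofReal_tsum_of_nonneg (fun m => mul_nonneg (sq_nonneg _)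
                  (mul_nonneg (add_nonneg (Nat.cast_nonneg m) zero_le_one)
                    (pow_nonneg h0 m))) hg4.summable).symm
            _ = ENNReal.ofReal (p n ^ 2 * (r/(1-r)^2 + (1-r)⁻¹)) := by rw [hg4.tsum_eq]
            _ ≤ ENNReal.ofReal (g n) := ENNReal.ofReal_le_ofReal hsum_le
  -- summability and Borel-Cantelli
  have hg_nonneg : ∀ n, 0 ≤ g n := fun n => by
    simp only [hg_def]
    positivity
  have hgle : ∀ n : ℕ, g n ≤ 4 * (((n:ℝ)+1)^2)⁻¹ := by
    intro n
    have h1 : (0:ℝ) < (n:ℝ)+1 := by positivity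
    have key : g n = (((n:ℝ)+2)^2) / (((n:ℝ)+1)^2)^2 := by
      simp only [hg_def, hp_def]
      field_simp
    rw [key, show (4:ℝ) * (((n:ℝ)+1)^2)⁻¹ = 4 / ((n:ℝ)+1)^2 by rw [div_eq_mul_inv]]
    rw [div_le_div_iff₀ (by positivity) (by positivity)]
    have hn0 : (0:ℝ) ≤ (n:ℝ) := Nat.cast_nonneg n
    have ha : ((n:ℝ)+2)^2 ≤ 4*((n:ℝ)+1)^2 := by nlinarith
    calc ((n:ℝ)+2)^2 * ((n:ℝ)+1)^2 ≤ 4*((n:ℝ)+1)^2 * ((n:ℝ)+1)^2 :=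
          mul_le_mul_of_nonneg_right ha (sq_nonneg _)
      _ = 4 * (((n:ℝ)+1)^2)^2 := by ring
  have hsummable4 : Summable (fun n : ℕ => 4 * (((n:ℝ)+1)^2)⁻¹) := by
    have hbase : Summable (fun n : ℕ => 1 / (n:ℝ)^2) :=
      Real.summable_one_div_nat_pow.mpr one_lt_two
    have hshift : Summable (fun n : ℕ => 1 / ((n+1 : ℕ):ℝ)^2) :=
      (summable_nat_add_iff (f := fun n : ℕ => 1 / (n:ℝ)^2) 1).mpr hbase
    have h2 : Summable (fun n : ℕ => (((n:ℝ)+1)^2)⁻¹) := by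
      refine hshift.congr (fun n => ?_)
      push_cast
      rw [one_div]
    exact h2.mul_left 4
  have hgsummable : Summable g := Summable.of_nonneg_of_le hg_nonneg hgle hsummable4
  have htot : (∑' n : ℕ, P (Bset n)) ≠ ⊤ := by
    refine ne_top_of_le_ne_top ?_ (ENNReal.tsum_le_tsum hBbound)
    rw [← ENNReal.ofReal_tsum_of_nonneg hg_nonneg hgsummable]
    exact ENNReal.ofReal_ne_top
  have hae1 : ∀ᵐ ω ∂P, ∀ᶠ n in atTop, ω ∉ Bset n := ae_eventually_notMem htot
  -- unboundedness
  have hU : ∀ n : ℕ, P {ω | ∀ i, 1 ≤ i → X i ω ≤ n} = 0 := by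
    intro n
    have hJ : ∀ J : ℕ, P {ω | ∀ i, 1 ≤ i → X i ω ≤ n} ≤ ENNReal.ofReal (Fr n) ^ J := by
      intro J
      have hsub : {ω | ∀ i, 1 ≤ i → X i ω ≤ n} ⊆
          ⋂ m ∈ Finset.Ico 1 (J+1), X m ⁻¹' Set.Iic n := by
        intro ω' hω'
        refine Set.mem_iInter₂.mpr fun m hm => ?_
        rw [Finset.mem_Ico] at hm
        exact hω' m hm.1
      refine le_trans (measure_mono hsub) ?_
      rw [hindep.meas_biInter (fun m _ => ⟨Set.Iic n, trivial, rfl⟩)]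
      rw [Finset.prod_congr rfl (fun m _ => hIic m n), Finset.prod_const, Nat.card_Ico]
      simp
    have hlt1 : ENNReal.ofReal (Fr n) < 1 := ENNReal.ofReal_lt_one.mpr (hFrlt n)
    exact le_antisymm
      (ge_of_tendsto' (ENNReal.tendsto_pow_atTop_nhds_zero_of_lt_one hlt1) hJ) (by simp)
  have hae2 : ∀ᵐ ω ∂P, ∀ n : ℕ, ∃ i, 1 ≤ i ∧ n < X i ω := by
    rw [ae_iff]
    refine measure_mono_null ?_
      (measure_iUnion_null (s := fun n => {ω | ∀ i, 1 ≤ i → X i ω ≤ n}) hU)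
    intro ω' hω'
    simp only [Set.mem_setOf_eq] at hω'
    push_neg at hω'
    obtain ⟨n, hn⟩ := hω'
    exact Set.mem_iUnion.mpr ⟨n, fun i hi => hn i hi⟩
  -- conclusion
  filter_upwards [hae1, hae2] with ω h1 h2
  obtain ⟨N, hN⟩ := eventually_atTop.mp h1
  exact det_main X ω h2 N (fun n hn hex => hN n hn hex)
end

section
/- Let p be a probability measure on ℕ with eventually simple records, and let (X_i)_{i≥1} be i.i.d. samples from p with record value sequence (R_k)_{k≥1}. Then the probability that n appears among the record values, ℙ(∃ k, R_k = n), tends to 0 as n → ∞. -/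
set_option linter.unusedSectionVars false


open MeasureTheory ProbabilityTheory Filter

section Aux

variable {Ω : Type*}

/-- `i` is a weak record index. -/
def IsWR (X : ℕ → Ω → ℕ) (ω : Ω) (i : ℕ) : Prop :=
  ∀ j, 1 ≤ j → j < i → X j ω ≤ X i ω

/-- The set of "good" sample points: those having infinitely many weak record indices. -/
def GoodSet (X : ℕ → Ω → ℕ) : Set Ω :=
  {ω | ∀ i, 1 ≤ i → ∃ j, i < j ∧ IsWR X ω j}

variable {X : ℕ → Ω → ℕ} {ω : Ω}

lemma recT_zero : recT X ω 0 = 1 := rfl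

lemma recT_succ_eq (k : ℕ) :
    recT X ω (k + 1) = sInf {i : ℕ | recT X ω k < i ∧ IsWR X ω i} := rfl

lemma recT_one_le (hω : ω ∈ GoodSet X) : ∀ k, 1 ≤ recT X ω k := by
  intro k
  induction k with
  | zero => simp [recT_zero]
  | succ k ih =>
      have hne : {i : ℕ | recT X ω k < i ∧ IsWR X ω i}.Nonempty := by
        obtain ⟨j, hj, hw⟩ := hω _ ih
        exact ⟨j, hj, hw⟩
      have := Nat.sInf_mem hne
      rw [recT_succ_eq]
      exact le_trans ih (le_of_lt this.1)

lemma recT_succ_mem (hω : ω ∈ GoodSet X) (k : ℕ) :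
    recT X ω k < recT X ω (k + 1) ∧ IsWR X ω (recT X ω (k + 1)) := by
  have hne : {i : ℕ | recT X ω k < i ∧ IsWR X ω i}.Nonempty := by
    obtain ⟨j, hj, hw⟩ := hω _ (recT_one_le hω k)
    exact ⟨j, hj, hw⟩
  have := Nat.sInf_mem hne
  rw [recT_succ_eq]
  exact this

lemma recT_strictMono (hω : ω ∈ GoodSet X) : StrictMono (recT X ω) :=
  strictMono_nat_of_lt_succ fun k => (recT_succ_mem hω k).1

lemma recT_gt (hω : ω ∈ GoodSet X) : ∀ k, k < recT X ω k := by
  intro k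
  induction k with
  | zero => simp [recT_zero]
  | succ k ih => exact lt_of_le_of_lt ih (recT_succ_mem hω k).1

lemma isWR_recT (hω : ω ∈ GoodSet X) {k : ℕ} (hk : 1 ≤ k) : IsWR X ω (recT X ω k) := by
  obtain ⟨m, rfl⟩ := Nat.exists_eq_add_of_le hk
  have := (recT_succ_mem hω m).2
  simpa [Nat.add_comm] using this

lemma recT_two_le (hω : ω ∈ GoodSet X) {k : ℕ} (hk : 1 ≤ k) : 2 ≤ recT X ω k := by
  have h0 : recT X ω 0 < recT X ω k := recT_strictMono hω (by omega)
  rw [recT_zero] at h0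
  omega

/-- every weak record index `≥ 2` is a record time. -/
lemma exists_recT_eq (hω : ω ∈ GoodSet X) {i : ℕ} (h2 : 2 ≤ i) (hwr : IsWR X ω i) :
    ∃ k, 1 ≤ k ∧ recT X ω k = i := by
  have claim : ∀ k, i ≤ recT X ω k → ∃ m, recT X ω m < i ∧ i ≤ recT X ω (m + 1) := by
    intro k
    induction k with
    | zero => intro h; rw [recT_zero] at h; omega
    | succ k ih =>
        intro h
        by_cases h' : i ≤ recT X ω k
        · exact ih h'
        · exact ⟨k, by omega, h⟩
  obtain ⟨m, hm1, hm2⟩ := claim i (le_of_lt (recT_gt hω i))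
  refine ⟨m + 1, by omega, ?_⟩
  have hle : recT X ω (m + 1) ≤ i := by
    rw [recT_succ_eq]
    exact Nat.sInf_le ⟨hm1, hwr⟩
  omega

lemma mem_goal_set (hω : ω ∈ GoodSet X) {n k : ℕ} (hk : 1 ≤ k) (hv : recV X ω k = n) :
    ∃ i, 2 ≤ i ∧ X i ω = n ∧ ∀ j, 1 ≤ j → j < i → X j ω ≤ n := by
  refine ⟨recT X ω k, recT_two_le hω hk, hv, fun j hj1 hj2 => ?_⟩
  have := isWR_recT hω hk j hj1 hj2
  rw [recV] at hv
  omega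

lemma pair_to_recV (hω : ω ∈ GoodSet X) {n i i' : ℕ} (h2 : 2 ≤ i) (hii' : i < i')
    (hxi : X i ω = n) (hxi' : X i' ω = n)
    (hall : ∀ j, 1 ≤ j → j < i' → X j ω ≤ n) :
    ∃ k, 1 ≤ k ∧ recV X ω k = n ∧ recV X ω (k + 1) = n := by
  have hwr_i : IsWR X ω i := fun j hj1 hj2 => by
    have := hall j hj1 (lt_trans hj2 hii'); omega
  have hwr_i' : IsWR X ω i' := fun j hj1 hj2 => by
    have := hall j hj1 hj2; omega
  obtain ⟨k, hk1, hki⟩ := exists_recT_eq hω h2 hwr_i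
  obtain ⟨k', hk'1, hk'i⟩ := exists_recT_eq hω (by omega) hwr_i'
  have hkk' : k < k' := by
    have := (recT_strictMono hω).lt_iff_lt (a := k) (b := k')
    omega
  refine ⟨k, hk1, by rw [recV, hki, hxi], ?_⟩
  -- recV at k+1 equals n
  have h1 : recT X ω k < recT X ω (k + 1) := recT_strictMono hω (by omega)
  have hlow : X (recT X ω k) ω ≤ X (recT X ω (k + 1)) ω := by
    refine isWR_recT hω (by omega : (1:ℕ) ≤ k + 1) _ ?_ ?_
    · rw [hki]; omega
    · exact h1
  rw [hki, hxi] at hlow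
  by_cases hEq : k + 1 = k'
  · rw [recV, hEq, hk'i, hxi']
  · have h2' : recT X ω (k + 1) < recT X ω k' := recT_strictMono hω (by omega)
    have hup : X (recT X ω (k + 1)) ω ≤ n := by
      have := hall (recT X ω (k + 1)) (recT_one_le hω (k + 1)) (by omega)
      omega
    rw [recV]; omega

end Aux

section Meas

variable {Ω : Type*} [MeasurableSpace Ω] (P : Measure Ω) [IsProbabilityMeasure P]
  (p : PMF ℕ) (X : ℕ → Ω → ℕ)

/-- the event that `n` occurs at least twice as a weak record value. -/
def WRpair (n : ℕ) : Set Ω :=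
  ⋃ (i : ℕ), ⋃ (i' : ℕ), ⋃ (_ : 2 ≤ i ∧ i < i'),
    (X i ⁻¹' {n} ∩ X i' ⁻¹' {n} ∩ ⋂ (j : ℕ), ⋂ (_ : 1 ≤ j ∧ j < i'), X j ⁻¹' Set.Iic n)

lemma mem_WRpair {n : ℕ} {ω : Ω} :
    ω ∈ WRpair X n ↔ ∃ i i', (2 ≤ i ∧ i < i') ∧ X i ω = n ∧ X i' ω = n ∧
      ∀ j, 1 ≤ j → j < i' → X j ω ≤ n := by
  simp only [WRpair, Set.mem_iUnion, Set.mem_inter_iff, Set.mem_preimage,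
    Set.mem_singleton_iff, Set.mem_iInter, Set.mem_Iic, and_imp]
  constructor
  · rintro ⟨i, i', ⟨h1, h2⟩, ⟨hx, hx'⟩, hall⟩
    exact ⟨i, i', ⟨h1, h2⟩, hx, hx', hall⟩
  · rintro ⟨i, i', ⟨h1, h2⟩, hx, hx', hall⟩
    exact ⟨i, i', ⟨h1, h2⟩, ⟨hx, hx'⟩, hall⟩

variable (hmeas : ∀ i, Measurable (X i))

include hmeas in
lemma WRpair_measurable (n : ℕ) : MeasurableSet (WRpair X n) := by
  refine MeasurableSet.iUnion fun i => MeasurableSet.iUnion fun i' =>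
    MeasurableSet.iUnion fun _ => ?_
  refine (((hmeas i) .of_discrete).inter ((hmeas i') .of_discrete)).inter ?_
  exact MeasurableSet.iInter fun j => MeasurableSet.iInter fun _ => (hmeas j) .of_discrete

variable (hid : ∀ i, Measure.map (X i) P = p.toMeasure)

include hmeas hid in
lemma map_eval (j : ℕ) (s : Set ℕ) : P (X j ⁻¹' s) = p.toMeasure s := by
  rw [← hid j, Measure.map_apply (hmeas j) .of_discrete]

variable (hindep : iIndepFun X P)

include hmeas hid hindep in
lemma meas_biInter_Ioc (a b : ℕ) (f : ℕ → Set ℕ) :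
    P (⋂ j ∈ Finset.Ioc a b, X j ⁻¹' f j) = ∏ j ∈ Finset.Ioc a b, p.toMeasure (f j) := by
  rw [hindep.measure_inter_preimage_eq_mul (Finset.Ioc a b) (sets := f)
    (fun i _ => .of_discrete)]
  exact Finset.prod_congr rfl fun j _ => map_eval P p X hmeas hid j (f j)

end Meas

section Events

variable {Ω : Type*} (X : ℕ → Ω → ℕ) (n : ℕ)

/-- constraint sets for the "first weak record of value n at time t+2" event. -/
def fs (t : ℕ) (j : ℕ) : Set ℕ :=
  if j = t + 2 then {n} else if j = 1 then Set.Iic n else Set.Iio n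

def Fev (t : ℕ) : Set Ω := ⋂ j ∈ Finset.Ioc 0 (t + 2), X j ⁻¹' fs n t j

def vs (t : ℕ) (j : ℕ) : Set ℕ := if j = t + 2 then {n} else Set.Iio n

def Vev (t : ℕ) : Set Ω := ⋂ j ∈ Finset.Ioc 1 (t + 2), X j ⁻¹' vs n t j

def ws (t u : ℕ) (j : ℕ) : Set ℕ :=
  if j = t + 2 ∨ j = t + u + 3 then {n}
  else if j = 1 then Set.Iic n else Set.Iio n

def Wev (t u : ℕ) : Set Ω := ⋂ j ∈ Finset.Ioc 0 (t + u + 3), X j ⁻¹' ws n t u j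

lemma mem_Fev {t : ℕ} {ω : Ω} :
    ω ∈ Fev X n t ↔ ∀ j, 0 < j → j ≤ t + 2 → X j ω ∈ fs n t j := by
  simp [Fev, Set.mem_iInter]

lemma mem_Vev {t : ℕ} {ω : Ω} :
    ω ∈ Vev X n t ↔ ∀ j, 1 < j → j ≤ t + 2 → X j ω ∈ vs n t j := by
  simp [Vev, Set.mem_iInter]

lemma mem_Wev {t u : ℕ} {ω : Ω} :
    ω ∈ Wev X n t u ↔ ∀ j, 0 < j → j ≤ t + u + 3 → X j ω ∈ ws n t u j := by
  simp [Wev, Set.mem_iInter]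

lemma Fev_disjoint_core {t t' : ℕ} (h : t < t') : Disjoint (Fev X n t) (Fev X n t') := by
  rw [Set.disjoint_left]
  intro ω h1 h2
  have e1 : X (t + 2) ω ∈ fs n t (t + 2) := (mem_Fev X n).1 h1 _ (by omega) (by omega)
  have e2 : X (t + 2) ω ∈ fs n t' (t + 2) := (mem_Fev X n).1 h2 _ (by omega) (by omega)
  rw [fs, if_pos rfl] at e1
  rw [fs, if_neg (by omega), if_neg (by omega)] at e2
  rw [Set.mem_singleton_iff] at e1
  rw [Set.mem_Iio] at e2
  omega

lemma Fev_disjoint : Pairwise (Function.onFun Disjoint (Fev X n)) := by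
  intro t t' htt'
  rcases Nat.lt_or_ge t t' with h | h
  · exact Fev_disjoint_core X n h
  · exact (Fev_disjoint_core X n (by omega : t' < t)).symm

lemma Vev_disjoint_core {t t' : ℕ} (h : t < t') : Disjoint (Vev X n t) (Vev X n t') := by
  rw [Set.disjoint_left]
  intro ω h1 h2
  have e1 : X (t + 2) ω ∈ vs n t (t + 2) := (mem_Vev X n).1 h1 _ (by omega) (by omega)
  have e2 : X (t + 2) ω ∈ vs n t' (t + 2) := (mem_Vev X n).1 h2 _ (by omega) (by omega)
  rw [vs, if_pos rfl] at e1
  rw [vs, if_neg (by omega)] at e2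
  rw [Set.mem_singleton_iff] at e1
  rw [Set.mem_Iio] at e2
  omega

lemma Vev_disjoint : Pairwise (Function.onFun Disjoint (Vev X n)) := by
  intro t t' htt'
  rcases Nat.lt_or_ge t t' with h | h
  · exact Vev_disjoint_core X n h
  · exact (Vev_disjoint_core X n (by omega : t' < t)).symm

lemma Wev_disjoint_core1 {t u t' u' : ℕ} (h : t < t') :
    Disjoint (Wev X n t u) (Wev X n t' u') := by
  rw [Set.disjoint_left]
  intro ω h1 h2
  have e1 : X (t + 2) ω ∈ ws n t u (t + 2) :=
    (mem_Wev X n).1 h1 _ (by omega) (by omega)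
  have e2 : X (t + 2) ω ∈ ws n t' u' (t + 2) :=
    (mem_Wev X n).1 h2 _ (by omega) (by omega)
  rw [ws, if_pos (Or.inl rfl)] at e1
  rw [ws, if_neg (by omega), if_neg (by omega)] at e2
  rw [Set.mem_singleton_iff] at e1
  rw [Set.mem_Iio] at e2
  omega

lemma Wev_disjoint_core2 {t u u' : ℕ} (h : u < u') :
    Disjoint (Wev X n t u) (Wev X n t u') := by
  rw [Set.disjoint_left]
  intro ω h1 h2
  have e1 : X (t + u + 3) ω ∈ ws n t u (t + u + 3) :=
    (mem_Wev X n).1 h1 _ (by omega) (by omega)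
  have e2 : X (t + u + 3) ω ∈ ws n t u' (t + u + 3) :=
    (mem_Wev X n).1 h2 _ (by omega) (by omega)
  rw [ws, if_pos (Or.inr rfl)] at e1
  rw [ws, if_neg (by omega), if_neg (by omega)] at e2
  rw [Set.mem_singleton_iff] at e1
  rw [Set.mem_Iio] at e2
  omega

lemma Wev_disjoint : Pairwise (Function.onFun Disjoint (fun q : ℕ × ℕ => Wev X n q.1 q.2)) := by
  intro ⟨t, u⟩ ⟨t', u'⟩ hne
  simp only [ne_eq, Prod.mk.injEq, not_and] at hne
  rcases Nat.lt_trichotomy t t' with ht | ht | ht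
  · exact Wev_disjoint_core1 X n ht
  · subst ht
    have hu : u ≠ u' := fun h => hne rfl h
    rcases Nat.lt_or_ge u u' with h | h
    · exact Wev_disjoint_core2 X n h
    · exact (Wev_disjoint_core2 X n (by omega : u' < u)).symm
  · exact (Wev_disjoint_core1 X n ht).symm

lemma Fev_subset_Vev (t : ℕ) : Fev X n t ⊆ Vev X n t := by
  intro ω h
  rw [mem_Vev]
  intro j hj1 hj2
  have := (mem_Fev X n).1 h j (by omega) hj2
  rw [vs]
  rw [fs] at this
  by_cases hjt : j = t + 2
  · rw [if_pos hjt]; rwa [if_pos hjt] at this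
  · rw [if_neg hjt]; rwa [if_neg hjt, if_neg (by omega)] at this

lemma Wev_subset_WRpair [MeasurableSpace Ω] (t u : ℕ) : Wev X n t u ⊆ WRpair X n := by
  intro ω h
  rw [mem_WRpair]
  refine ⟨t + 2, t + u + 3, ⟨by omega, by omega⟩, ?_, ?_, ?_⟩
  · have := (mem_Wev X n).1 h (t + 2) (by omega) (by omega)
    rw [ws, if_pos (Or.inl rfl), Set.mem_singleton_iff] at this
    exact this
  · have := (mem_Wev X n).1 h (t + u + 3) (by omega) (by omega)
    rw [ws, if_pos (Or.inr rfl), Set.mem_singleton_iff] at this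
    exact this
  · intro j hj1 hj2
    have := (mem_Wev X n).1 h j (by omega) (by omega)
    rw [ws] at this
    by_cases h1 : j = t + 2 ∨ j = t + u + 3
    · rw [if_pos h1, Set.mem_singleton_iff] at this; omega
    · rw [if_neg h1] at this
      by_cases h2 : j = 1
      · rw [if_pos h2, Set.mem_Iic] at this; omega
      · rw [if_neg h2, Set.mem_Iio] at this; omega

/-- first-occurrence decomposition: a good sample point with record value `n`
lies in some `Fev`. -/
lemma goal_subset_Fev {ω : Ω} (hω : ω ∈ GoodSet X) {k : ℕ} (hk : 1 ≤ k)
    (hv : recV X ω k = n) : ∃ t, ω ∈ Fev X n t := by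
  obtain ⟨i, hi2, hxi, hall⟩ := mem_goal_set hω hk hv
  have hne : {i | 2 ≤ i ∧ X i ω = n ∧ ∀ j, 1 ≤ j → j < i → X j ω ≤ n}.Nonempty :=
    ⟨i, hi2, hxi, hall⟩
  set i₀ := sInf {i | 2 ≤ i ∧ X i ω = n ∧ ∀ j, 1 ≤ j → j < i → X j ω ≤ n} with hi₀
  have hmem := Nat.sInf_mem hne
  obtain ⟨h2, hx, hle⟩ := hmem
  refine ⟨i₀ - 2, ?_⟩
  rw [mem_Fev]
  have hi0 : i₀ - 2 + 2 = i₀ := by omega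
  intro j hj1 hj2
  rw [hi0] at hj2
  rw [fs, hi0]
  by_cases hji : j = i₀
  · rw [if_pos hji, hji, Set.mem_singleton_iff]; exact hx
  · rw [if_neg hji]
    by_cases hj1' : j = 1
    · rw [if_pos hj1', hj1', Set.mem_Iic]; exact hle 1 le_rfl (by omega)
    · rw [if_neg hj1', Set.mem_Iio]
      have hjlt : j < i₀ := by omega
      have hjle : X j ω ≤ n := hle j (by omega) hjlt
      rcases Nat.lt_or_ge (X j ω) n with h | h
      · exact h
      · exfalso
        have hxj : X j ω = n := by omega
        have : j ∈ {i | 2 ≤ i ∧ X i ω = n ∧ ∀ l, 1 ≤ l → l < i → X l ω ≤ n} :=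
          ⟨by omega, hxj, fun l hl1 hl2 => hle l hl1 (by omega)⟩
        have := Nat.sInf_le this
        omega

end Events

section Probs

variable {Ω : Type*} [MeasurableSpace Ω] (P : Measure Ω) [IsProbabilityMeasure P]
  (p : PMF ℕ) (X : ℕ → Ω → ℕ)
  (hmeas : ∀ i, Measurable (X i))
  (hindep : iIndepFun X P)
  (hid : ∀ i, Measure.map (X i) P = p.toMeasure)

lemma prod_Ioc_const_of (g : ℕ → ENNReal) (a b : ℕ) (x : ENNReal)
    (hg : ∀ j, a < j → j ≤ b → g j = x) :
    ∏ j ∈ Finset.Ioc a b, g j = x ^ (b - a) := by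
  trans ∏ _j ∈ Finset.Ioc a b, x
  · exact Finset.prod_congr rfl fun j hj => by
      rw [Finset.mem_Ioc] at hj; exact hg j hj.1 hj.2
  · rw [Finset.prod_const, Nat.card_Ioc]

include hmeas hindep hid in
lemma prob_Fev (n t : ℕ) :
    P (Fev X n t) = p.toMeasure (Set.Iic n) *
      ((p.toMeasure (Set.Iio n)) ^ t * p.toMeasure {n}) := by
  rw [Fev, meas_biInter_Ioc P p X hmeas hid hindep 0 (t + 2) (fs n t)]
  rw [← Finset.prod_Ioc_consecutive _ (by omega : 0 ≤ 1) (by omega : 1 ≤ t + 2)]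
  rw [← Finset.prod_Ioc_consecutive _ (by omega : 1 ≤ t + 1) (by omega : t + 1 ≤ t + 2)]
  have h0 : Finset.Ioc 0 1 = {1} := Nat.Ioc_succ_singleton 0
  have h2 : Finset.Ioc (t + 1) (t + 2) = {t + 2} := Nat.Ioc_succ_singleton (t+1)
  rw [h0, h2, Finset.prod_singleton, Finset.prod_singleton]
  rw [prod_Ioc_const_of _ 1 (t + 1) (p.toMeasure (Set.Iio n))
    (fun j hj1 hj2 => by rw [fs, if_neg (by omega), if_neg (by omega)])]
  rw [show fs n t 1 = Set.Iic n by rw [fs, if_neg (by omega), if_pos rfl]]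
  rw [show fs n t (t + 2) = {n} by rw [fs, if_pos rfl]]
  rw [show t + 1 - 1 = t by omega]

include hmeas hindep hid in
lemma prob_Vev (n t : ℕ) :
    P (Vev X n t) = (p.toMeasure (Set.Iio n)) ^ t * p.toMeasure {n} := by
  rw [Vev, meas_biInter_Ioc P p X hmeas hid hindep 1 (t + 2) (vs n t)]
  rw [← Finset.prod_Ioc_consecutive _ (by omega : 1 ≤ t + 1) (by omega : t + 1 ≤ t + 2)]
  have h2 : Finset.Ioc (t + 1) (t + 2) = {t + 2} := Nat.Ioc_succ_singleton (t+1)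
  rw [h2, Finset.prod_singleton]
  rw [prod_Ioc_const_of _ 1 (t + 1) (p.toMeasure (Set.Iio n))
    (fun j hj1 hj2 => by rw [vs, if_neg (by omega)])]
  rw [show vs n t (t + 2) = {n} by rw [vs, if_pos rfl]]
  rw [show t + 1 - 1 = t by omega]

include hmeas hindep hid in
lemma prob_Wev (n t u : ℕ) :
    P (Wev X n t u) = (p.toMeasure (Set.Iic n) *
      ((p.toMeasure (Set.Iio n)) ^ t * p.toMeasure {n})) *
      ((p.toMeasure (Set.Iio n)) ^ u * p.toMeasure {n}) := by
  rw [Wev, meas_biInter_Ioc P p X hmeas hid hindep 0 (t + u + 3) (ws n t u)]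
  rw [← Finset.prod_Ioc_consecutive _ (by omega : 0 ≤ t + 2) (by omega : t + 2 ≤ t + u + 3)]
  rw [← Finset.prod_Ioc_consecutive _ (by omega : 0 ≤ 1) (by omega : 1 ≤ t + 2)]
  rw [← Finset.prod_Ioc_consecutive _ (by omega : 1 ≤ t + 1) (by omega : t + 1 ≤ t + 2)]
  rw [← Finset.prod_Ioc_consecutive _ (by omega : t + 2 ≤ t + u + 2)
    (by omega : t + u + 2 ≤ t + u + 3)]
  have h0 : Finset.Ioc 0 1 = {1} := Nat.Ioc_succ_singleton 0
  have h2 : Finset.Ioc (t + 1) (t + 2) = {t + 2} := Nat.Ioc_succ_singleton (t+1)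
  have h3 : Finset.Ioc (t + u + 2) (t + u + 3) = {t + u + 3} := Nat.Ioc_succ_singleton (t+u+2)
  rw [h0, h2, h3, Finset.prod_singleton, Finset.prod_singleton, Finset.prod_singleton]
  rw [prod_Ioc_const_of _ 1 (t + 1) (p.toMeasure (Set.Iio n))
    (fun j hj1 hj2 => by rw [ws, if_neg (by omega), if_neg (by omega)])]
  rw [prod_Ioc_const_of _ (t + 2) (t + u + 2) (p.toMeasure (Set.Iio n))
    (fun j hj1 hj2 => by rw [ws, if_neg (by omega), if_neg (by omega)])]
  rw [show ws n t u 1 = Set.Iic n by rw [ws, if_neg (by omega), if_pos rfl]]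
  rw [show ws n t u (t + 2) = {n} by rw [ws, if_pos (Or.inl rfl)]]
  rw [show ws n t u (t + u + 3) = {n} by rw [ws, if_pos (Or.inr rfl)]]
  rw [show t + 1 - 1 = t by omega, show t + u + 2 - (t + 2) = u by omega]

include hmeas in
lemma Fev_measurable (n t : ℕ) : MeasurableSet (Fev X n t) :=
  Finset.measurableSet_biInter _ fun j _ => (hmeas j) .of_discrete

include hmeas in
lemma Vev_measurable (n t : ℕ) : MeasurableSet (Vev X n t) :=
  Finset.measurableSet_biInter _ fun j _ => (hmeas j) .of_discrete

include hmeas in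
lemma Wev_measurable (n t u : ℕ) : MeasurableSet (Wev X n t u) :=
  Finset.measurableSet_biInter _ fun j _ => (hmeas j) .of_discrete

include hmeas hindep hid in
/-- The good set has full measure. -/
lemma good_ae : P (GoodSet X)ᶜ = 0 := by
  classical
  set Sbad : Set ℕ := {x | p.toMeasure {y | x ≤ y} = 0} with hSbad
  have hSbad0 : p.toMeasure Sbad = 0 := by
    rw [PMF.toMeasure_apply_eq_zero_iff _ _]
    rw [Set.disjoint_right]
    intro x hx
    rw [hSbad, Set.mem_setOf_eq] at hx
    intro hsupp
    rw [PMF.mem_support_iff] at hsupp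
    apply hsupp
    have : p.toMeasure {x} = 0 := by
      refine measure_mono_null ?_ hx
      intro y hy
      rw [Set.mem_singleton_iff] at hy
      subst hy
      simp only [Set.mem_setOf_eq]
      exact le_rfl
    rwa [PMF.toMeasure_apply_singleton _ _ (measurableSet_singleton x)] at this
    exact .of_discrete
  set N1 : Set Ω := ⋃ j, X j ⁻¹' Sbad with hN1
  have hN1null : P N1 = 0 := by
    refine measure_iUnion_null fun j => ?_
    rw [map_eval P p X hmeas hid j Sbad]
    exact hSbad0
  set N2 : Set Ω := ⋃ (m : ℕ), ⋃ (i : ℕ), ⋃ (_ : p.toMeasure {y | m ≤ y} ≠ 0),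
    ⋂ (j : ℕ), ⋂ (_ : i < j), X j ⁻¹' Set.Iio m with hN2
  have hN2null : P N2 = 0 := by
    refine measure_iUnion_null fun m => measure_iUnion_null fun i => measure_iUnion_null fun hm => ?_
    set ρ := p.toMeasure (Set.Iio m) with hρ
    have hρ1 : ρ < 1 := by
      have hcover : (Set.Iio m) ∪ {y | m ≤ y} = Set.univ := by
        ext y; simp [Set.mem_Iio, Nat.lt_or_ge]
      have hdisj : Disjoint (Set.Iio m) {y | m ≤ y} := by
        rw [Set.disjoint_left]; intro y hy1 hy2
        rw [Set.mem_Iio] at hy1; rw [Set.mem_setOf_eq] at hy2; omega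
      have hsum : ρ + p.toMeasure {y | m ≤ y} = 1 := by
        rw [hρ, ← measure_union hdisj .of_discrete, hcover, measure_univ]
      rcases lt_or_eq_of_le (le_of_eq_of_le hρ.symm.symm (by
        rw [← hsum]; exact le_add_right le_rfl) : ρ ≤ 1) with h | h
      · exact h
      · exfalso
        rw [h] at hsum
        have : p.toMeasure {y | m ≤ y} = 0 := by
          have h1 : (1 : ENNReal) + p.toMeasure {y | m ≤ y} = 1 + 0 := by
            rw [add_zero]; exact hsum
          exact (ENNReal.add_right_inj (by norm_num)).1 h1
        exact hm this
    have hbound : ∀ N : ℕ, P (⋂ (j : ℕ), ⋂ (_ : i < j), X j ⁻¹' Set.Iio m) ≤ ρ ^ N := by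
      intro N
      have hsub : (⋂ (j : ℕ), ⋂ (_ : i < j), X j ⁻¹' Set.Iio m) ⊆
          ⋂ j ∈ Finset.Ioc i (i + N), X j ⁻¹' Set.Iio m := by
        intro ω hω
        rw [Set.mem_iInter₂]
        intro j hj
        rw [Finset.mem_Ioc] at hj
        exact Set.mem_iInter₂.1 (by exact_mod_cast hω) j hj.1
      refine le_trans (measure_mono hsub) ?_
      rw [meas_biInter_Ioc P p X hmeas hid hindep i (i + N) (fun _ => Set.Iio m)]
      rw [prod_Ioc_const_of _ i (i + N) ρ (fun j _ _ => rfl)]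
      rw [show i + N - i = N by omega]
    have htend : Tendsto (fun N : ℕ => ρ ^ N) atTop (nhds 0) :=
      ENNReal.tendsto_pow_atTop_nhds_zero_of_lt_one hρ1
    have := ge_of_tendsto' htend hbound
    exact le_antisymm this (zero_le)
  have hsub : (GoodSet X)ᶜ ⊆ N1 ∪ N2 := by
    intro ω hω
    by_contra hmem
    rw [Set.mem_union] at hmem
    push_neg at hmem
    obtain ⟨hm1, hm2⟩ := hmem
    apply hω
    intro i hi
    obtain ⟨l₀, hl₀mem, hl₀⟩ := Finset.exists_max_image (Finset.Icc 1 i)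
      (fun l => X l ω) ⟨1, Finset.mem_Icc.2 ⟨le_rfl, hi⟩⟩
    set m := X l₀ ω with hm
    have htail : p.toMeasure {y | m ≤ y} ≠ 0 := by
      intro h0
      apply hm1
      rw [hN1, Set.mem_iUnion]
      exact ⟨l₀, h0⟩
    have hex : ∃ j, i < j ∧ m ≤ X j ω := by
      by_contra hno
      push_neg at hno
      apply hm2
      rw [hN2, Set.mem_iUnion]
      refine ⟨m, Set.mem_iUnion.2 ⟨i, Set.mem_iUnion.2 ⟨htail, ?_⟩⟩⟩
      rw [Set.mem_iInter]
      intro j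
      rw [Set.mem_iInter]
      intro hj
      rw [Set.mem_preimage, Set.mem_Iio]
      exact hno j hj
    have hQ : ∃ j, i < j ∧ m ≤ X j ω := hex
    set j₀ := Nat.find hQ with hj₀
    have hspec := Nat.find_spec hQ
    rw [← hj₀] at hspec
    obtain ⟨hj₀i, hj₀m⟩ := hspec
    refine ⟨j₀, hj₀i, fun l hl1 hl2 => ?_⟩
    rcases le_or_gt l i with hli | hli
    · have : X l ω ≤ m := hl₀ l (Finset.mem_Icc.2 ⟨hl1, hli⟩)
      omega
    · have := Nat.find_min hQ (hj₀ ▸ hl2)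
      push_neg at this
      have := this hli
      omega
  refine le_antisymm ?_ (zero_le)
  calc P (GoodSet X)ᶜ ≤ P (N1 ∪ N2) := measure_mono hsub
    _ ≤ P N1 + P N2 := measure_union_le _ _
    _ = 0 := by rw [hN1null, hN2null, add_zero]

end Probs

/-- if `p` has eventually simple records, then the probability that `n`
appears among the record values of an i.i.d. sample from `p` tends to `0` as `n → ∞`. -/
theorem prob_record_value_tendsto_zero
    {Ω : Type*} [MeasurableSpace Ω] (P : Measure Ω) [IsProbabilityMeasure P]
    (p : PMF ℕ)
    (X : ℕ → Ω → ℕ) (hmeas : ∀ i, Measurable (X i))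
    (hindep : iIndepFun X P)
    (hid : ∀ i, Measure.map (X i) P = p.toMeasure)
    (hsimple : ∀ᵐ ω ∂P, ∃ K : ℕ, ∀ k ≥ K, recV X ω k < recV X ω (k + 1)) :
    Tendsto (fun n : ℕ => P {ω | ∃ k : ℕ, 1 ≤ k ∧ recV X ω k = n}) atTop (nhds 0) := by
  classical
  set A : ℕ → Set Ω := fun n => {ω | ∃ k : ℕ, 1 ≤ k ∧ recV X ω k = n} with hA
  set c : ℕ → ENNReal := fun n => p.toMeasure (Set.Iic n) with hc
  set γ : ℕ → ENNReal := fun n => p.toMeasure (Set.Iio n) with hγ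
  set β : ℕ → ENNReal := fun n => p.toMeasure {n} with hβ
  set e : ℕ → ENNReal := fun n => ∑' t : ℕ, γ n ^ t * β n with he
  have hgood : P (GoodSet X)ᶜ = 0 := good_ae P p X hmeas hindep hid
  -- upper bounds for A
  have hAF : ∀ n, A n ∩ GoodSet X ⊆ ⋃ t, Fev X n t := by
    intro n ω hω
    obtain ⟨⟨k, hk1, hkv⟩, hg⟩ := hω
    obtain ⟨t, ht⟩ := goal_subset_Fev X n hg hk1 hkv
    exact Set.mem_iUnion.2 ⟨t, ht⟩
  have hPA_le : ∀ n (S : Set Ω), A n ∩ GoodSet X ⊆ S → P (A n) ≤ P S := by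
    intro n S hS
    calc P (A n) ≤ P (S ∪ (GoodSet X)ᶜ) := by
          refine measure_mono fun ω hω => ?_
          by_cases hg : ω ∈ GoodSet X
          · exact Or.inl (hS ⟨hω, hg⟩)
          · exact Or.inr hg
      _ ≤ P S + P (GoodSet X)ᶜ := measure_union_le _ _
      _ = P S := by rw [hgood, add_zero]
  have hPF : ∀ n, P (⋃ t, Fev X n t) = c n * e n := by
    intro n
    rw [measure_iUnion (Fev_disjoint X n) (fun t => Fev_measurable X hmeas n t)]
    rw [he]
    simp only [prob_Fev P p X hmeas hindep hid n]
    rw [ENNReal.tsum_mul_left]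
  have hPV : ∀ n, P (⋃ t, Vev X n t) = e n := by
    intro n
    rw [measure_iUnion (Vev_disjoint X n) (fun t => Vev_measurable X hmeas n t)]
    rw [he]
    simp only [prob_Vev P p X hmeas hindep hid n]
    rfl
  have hPW : ∀ n, P (⋃ q : ℕ × ℕ, Wev X n q.1 q.2) = (c n * e n) * e n := by
    intro n
    rw [measure_iUnion (Wev_disjoint X n) (fun q => Wev_measurable X hmeas n q.1 q.2)]
    rw [ENNReal.tsum_prod']
    simp only [prob_Wev P p X hmeas hindep hid n]
    calc ∑' (t : ℕ) (u : ℕ), (c n * (γ n ^ t * β n)) * (γ n ^ u * β n)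
        = ∑' (t : ℕ), (c n * (γ n ^ t * β n)) * ∑' (u : ℕ), (γ n ^ u * β n) := by
          congr 1; ext t; rw [ENNReal.tsum_mul_left]
      _ = (∑' (t : ℕ), c n * (γ n ^ t * β n)) * e n := by
          rw [he, ENNReal.tsum_mul_right]
      _ = (c n * e n) * e n := by rw [he, ENNReal.tsum_mul_left]
  -- the key inequality  P(A n)^2 ≤ P(WRpair n)
  have hkey : ∀ n, P (A n) * P (A n) ≤ P (WRpair X n) := by
    intro n
    have h1 : P (A n) ≤ c n * e n := by
      rw [← hPF n]; exact hPA_le n _ (hAF n)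
    have h2 : P (A n) ≤ e n := by
      rw [← hPV n]
      refine hPA_le n _ (Set.Subset.trans (hAF n) ?_)
      exact Set.iUnion_mono fun t => Fev_subset_Vev X n t
    have h3 : (⋃ q : ℕ × ℕ, Wev X n q.1 q.2) ⊆ WRpair X n :=
      Set.iUnion_subset fun q => Wev_subset_WRpair X n q.1 q.2
    calc P (A n) * P (A n) ≤ (c n * e n) * e n := mul_le_mul' h1 h2
      _ = P (⋃ q : ℕ × ℕ, Wev X n q.1 q.2) := (hPW n).symm
      _ ≤ P (WRpair X n) := measure_mono h3
  -- limsup of WRpair is null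
  set T : ℕ → Set Ω := fun N => ⋃ (i : ℕ), ⋃ (_ : N ≤ i), WRpair X i with hT
  have hTmeas : ∀ N, MeasurableSet (T N) :=
    fun N => MeasurableSet.iUnion fun i => MeasurableSet.iUnion fun _ =>
      WRpair_measurable X hmeas i
  have hTanti : Antitone T := by
    intro N M hNM ω hω
    rw [hT] at hω ⊢
    obtain ⟨i, hi⟩ := Set.mem_iUnion.1 hω
    obtain ⟨hMi, hmem⟩ := Set.mem_iUnion.1 hi
    exact Set.mem_iUnion.2 ⟨i, Set.mem_iUnion.2 ⟨le_trans hNM hMi, hmem⟩⟩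
  have hTinter : P (⋂ N, T N) = 0 := by
    -- a point in every T N is in WRpair n for arbitrarily large n
    obtain ⟨s, hs0, hsmeas, hsimp⟩ : ∃ s : Set Ω, P s = 0 ∧ MeasurableSet s ∧
        ∀ ω ∉ s, ∃ K : ℕ, ∀ k ≥ K, recV X ω k < recV X ω (k + 1) := by
      obtain ⟨s, hsub, hsm, hs0⟩ := exists_measurable_superset_of_null
        (by rwa [ae_iff] at hsimple :
          P {ω | ¬ ∃ K : ℕ, ∀ k ≥ K, recV X ω k < recV X ω (k + 1)} = 0)
      refine ⟨s, hs0, hsm, fun ω hω => ?_⟩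
      by_contra hno
      exact hω (hsub hno)
    have hsub2 : (⋂ N, T N) ⊆ s ∪ (GoodSet X)ᶜ := by
      intro ω hω
      by_contra hmem
      rw [Set.mem_union] at hmem
      push_neg at hmem
      obtain ⟨hm1, hm2⟩ := hmem
      rw [Set.notMem_compl_iff] at hm2
      obtain ⟨K, hK⟩ := hsimp ω hm1
      -- bound on possible values n
      set B := Finset.sup (Finset.range K) (recV X ω) with hB
      have hωT := Set.mem_iInter.1 hω (B + 1)
      rw [hT] at hωT
      obtain ⟨i, hi⟩ := Set.mem_iUnion.1 hωT
      obtain ⟨hBi, hmem'⟩ := Set.mem_iUnion.1 hi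
      obtain ⟨a, a', ⟨ha2, haa'⟩, hxa, hxa', hall⟩ := (mem_WRpair X).1 hmem'
      obtain ⟨k, hk1, hkv, hkv'⟩ := pair_to_recV hm2 ha2 haa' hxa hxa' hall
      have hkK : k < K := by
        by_contra hge
        have := hK k (by omega)
        omega
      have : i ≤ B := by
        rw [hB, ← hkv]
        exact Finset.le_sup (Finset.mem_range.2 hkK)
      omega
    refine le_antisymm ?_ (zero_le)
    calc P (⋂ N, T N) ≤ P (s ∪ (GoodSet X)ᶜ) := measure_mono hsub2
      _ ≤ P s + P (GoodSet X)ᶜ := measure_union_le _ _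
      _ = 0 := by rw [hs0, hgood, add_zero]
  have hTtend : Tendsto (fun N => P (T N)) atTop (nhds 0) := by
    have := tendsto_measure_iInter_atTop (μ := P)
      (fun N => (hTmeas N).nullMeasurableSet) hTanti ⟨0, measure_ne_top P _⟩
    rwa [hTinter] at this
  have hble : ∀ n, P (WRpair X n) ≤ P (T n) := by
    intro n
    refine measure_mono fun ω hω => ?_
    rw [hT]
    exact Set.mem_iUnion.2 ⟨n, Set.mem_iUnion.2 ⟨le_rfl, hω⟩⟩
  have hbtend : Tendsto (fun n => P (WRpair X n)) atTop (nhds 0) :=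
    tendsto_of_tendsto_of_tendsto_of_le_of_le tendsto_const_nhds hTtend
      (fun n => zero_le) hble
  -- conclude
  rw [ENNReal.tendsto_nhds_zero]
  intro ε hε
  set ε' := min ε 1 with hε'
  have hε'pos : 0 < ε' := lt_min hε (by norm_num)
  have hsq : 0 < ε' * ε' := ENNReal.mul_pos (ne_of_gt hε'pos) (ne_of_gt hε'pos)
  have hev : ∀ᶠ n in atTop, P (WRpair X n) < ε' * ε' :=
    hbtend.eventually (gt_mem_nhds hsq)
  refine hev.mono fun n hn => ?_
  have : P (A n) ≤ ε' := by
    by_contra hgt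
    push_neg at hgt
    have h1 : ε' * ε' ≤ P (A n) * P (A n) := mul_le_mul' (le_of_lt hgt) (le_of_lt hgt)
    have := lt_of_le_of_lt (le_trans h1 (hkey n)) hn
    exact lt_irrefl _ this
  exact le_trans this (min_le_left _ _)
end

section
/- Let G be a group, F ⊆ G a finite symmetric subset, and a ∈ G. If a is not F-switching (i.e., there exist f_1, f_2, f_3, f_4 ∈ F with (f_1, f_2) ≠ (f_3, f_4) and f_1 a f_2 = f_3 a f_4), then there exists a non-identity element f ∈ F·F such that a f a^{-1} ∈ F·F. -/
/-- if `F` is a finite symmetric subset of a group and `a` is not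
`F`-switching, then there is a non-identity element `f ∈ F·F` with `a f a⁻¹ ∈ F·F`. -/
theorem exists_conjugated_element_of_not_switching
    {G : Type*} [Group G] (F : Finset G) (hsym : ∀ f ∈ F, f⁻¹ ∈ F) (a : G)
    (hns : ∃ f₁ ∈ F, ∃ f₂ ∈ F, ∃ f₃ ∈ F, ∃ f₄ ∈ F,
      (f₁, f₂) ≠ (f₃, f₄) ∧ f₁ * a * f₂ = f₃ * a * f₄) :
    ∃ f : G, f ≠ 1 ∧ (∃ u ∈ F, ∃ v ∈ F, u * v = f) ∧
      (∃ u ∈ F, ∃ v ∈ F, a * f * a⁻¹ = u * v) := by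
  obtain ⟨f₁, h1, f₂, h2, f₃, h3, f₄, h4, hne, heq⟩ := hns
  refine ⟨f₂ * f₄⁻¹, ?_, ⟨f₂, h2, f₄⁻¹, hsym _ h4, rfl⟩,
    ⟨f₁⁻¹, hsym _ h1, f₃, h3, ?_⟩⟩
  · intro h
    have h24 : f₂ = f₄ := by
      have := mul_eq_one_iff_eq_inv.mp h
      simpa using this
    subst h24
    have h13 : f₁ = f₃ := mul_right_cancel (mul_right_cancel heq)
    exact hne (by rw [h13])
  · calc a * (f₂ * f₄⁻¹) * a⁻¹
        = f₁⁻¹ * (f₁ * a * f₂) * (f₄⁻¹ * a⁻¹) := by group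
      _ = f₁⁻¹ * (f₃ * a * f₄) * (f₄⁻¹ * a⁻¹) := by rw [heq]
      _ = f₁⁻¹ * f₃ := by group
end

section
/- Let (Λ = (λ, Σ, A)) be a scale on a countable group G, with Δ_n = A_0 ∪ ⋃_{i<n}(Σ_i^{±} ∪ A_i^{±}). Suppose every g ∈ G admits at most one spike decomposition and for all n ≥ 1, Σ_n ∩ Δ_n^{3λ(n)} = ∅ (Λ is a ladder). Then the despiking graph (with an edge from the prefix ←g to g for every spiked g) is a forest, i.e., contains no cycles: equivalently, the map g ↦ ←g (defined on spiked elements) generates no periodic orbits and each connected component contains a unique unspiked vertex. -/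
/-- A scale `Λ = (λ, Σ, A)` on a group `G`: a nondecreasing function `λ`, pairwise
disjoint sets `Σ_n` (used for `n ≥ 1`), and sets `A_n` with `1 ∈ A_0`. -/
structure GroupScale (G : Type*) [Group G] where
  lam : ℕ → ℕ
  Sig : ℕ → Set G
  A : ℕ → Set G
  lam_mono : Monotone lam
  Sig_disjoint : ∀ m n, m ≠ n → Disjoint (Sig m) (Sig n)
  one_mem : (1 : G) ∈ A 0

/-- Products of at most `k` elements of `S`. -/
def wordsLe {G : Type*} [Group G] (S : Set G) (k : ℕ) : Set G :=
  {g | ∃ l : List G, l.length ≤ k ∧ (∀ x ∈ l, x ∈ S) ∧ l.prod = g}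

/-- `Δ_n = A_0 ∪ ⋃_{i<n} (Σ_i^± ∪ A_i^±)`. -/
def GroupScale.Delta {G : Type*} [Group G] (Λ : GroupScale G) (n : ℕ) : Set G :=
  Λ.A 0 ∪ ⋃ i < n, (Λ.Sig i ∪ (Λ.Sig i)⁻¹ ∪ Λ.A i ∪ (Λ.A i)⁻¹)

/-- `(p, s, q)` is a spike decomposition of `g`: `g = p s q`, `s ∈ Σ_n` for some
`n ≥ 1`, and `p, q` are products of at most `λ(n)` elements of `Δ_n`. -/
def GroupScale.IsSpikeDecomp {G : Type*} [Group G] (Λ : GroupScale G)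
    (g p s q : G) : Prop :=
  g = p * s * q ∧ ∃ n, 1 ≤ n ∧ s ∈ Λ.Sig n ∧
    p ∈ wordsLe (Λ.Delta n) (Λ.lam n) ∧ q ∈ wordsLe (Λ.Delta n) (Λ.lam n)

/-- `g` is spiked if it admits a spike decomposition. -/
def GroupScale.Spiked {G : Type*} [Group G] (Λ : GroupScale G) (g : G) : Prop :=
  ∃ p s q, Λ.IsSpikeDecomp g p s q

/-- The despiking relation: `a` is the prefix of a spike decomposition of `b`. -/
def despikeRel {G : Type*} [Group G] (Λ : GroupScale G) (a b : G) : Prop :=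
  ∃ s q, Λ.IsSpikeDecomp b a s q

/-! ### Auxiliary lemmas on words -/

section Words

variable {G : Type*} [Group G]

lemma wordsLe_mono {S T : Set G} {j k : ℕ} (hST : S ⊆ T) (hjk : j ≤ k) :
    wordsLe S j ⊆ wordsLe T k := by
  rintro g ⟨l, hl, hmem, rfl⟩
  exact ⟨l, hl.trans hjk, fun x hx => hST (hmem x hx), rfl⟩

lemma wordsLe_mul {S : Set G} {j k : ℕ} {a b : G} (ha : a ∈ wordsLe S j)
    (hb : b ∈ wordsLe S k) : a * b ∈ wordsLe S (j + k) := by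
  obtain ⟨l, hl, hm, rfl⟩ := ha
  obtain ⟨l', hl', hm', rfl⟩ := hb
  refine ⟨l ++ l', by simpa using Nat.add_le_add hl hl', ?_, by simp⟩
  intro x hx
  rcases List.mem_append.mp hx with h | h
  exacts [hm x h, hm' x h]

lemma wordsLe_inv {S : Set G} (hS : ∀ x ∈ S, x⁻¹ ∈ S) {k : ℕ} {a : G}
    (ha : a ∈ wordsLe S k) : a⁻¹ ∈ wordsLe S k := by
  obtain ⟨l, hl, hm, rfl⟩ := ha
  refine ⟨(l.map fun x => x⁻¹).reverse, by simpa using hl, ?_,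
    (List.prod_inv_reverse l).symm⟩
  intro x hx
  simp only [List.mem_reverse, List.mem_map] at hx
  obtain ⟨y, hy, rfl⟩ := hx
  exact hS y (hm y hy)

end Words

namespace GroupScale

variable {G : Type*} [Group G] (Λ : GroupScale G)

lemma delta_mono {m n : ℕ} (h : m ≤ n) : Λ.Delta m ⊆ Λ.Delta n := by
  intro x hx
  rcases hx with h0 | h1
  · exact Or.inl h0
  · right
    simp only [Set.mem_iUnion] at h1 ⊢
    obtain ⟨i, hi, hx⟩ := h1
    exact ⟨i, lt_of_lt_of_le hi h, hx⟩

lemma delta_inv {n : ℕ} (hn : 1 ≤ n) : ∀ x ∈ Λ.Delta n, x⁻¹ ∈ Λ.Delta n := by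
  have key : ∀ i (x : G), x ∈ (Λ.Sig i ∪ (Λ.Sig i)⁻¹ ∪ Λ.A i ∪ (Λ.A i)⁻¹) →
      x⁻¹ ∈ (Λ.Sig i ∪ (Λ.Sig i)⁻¹ ∪ Λ.A i ∪ (Λ.A i)⁻¹) := by
    intro i x hx
    simp only [Set.mem_union, Set.mem_inv, inv_inv] at hx ⊢
    tauto
  intro x hx
  rcases hx with h0 | h1
  · right
    simp only [Set.mem_iUnion]
    refine ⟨0, hn, key 0 x ?_⟩
    simp only [Set.mem_union]
    tauto
  · right
    simp only [Set.mem_iUnion] at h1 ⊢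
    obtain ⟨i, hi, hx⟩ := h1
    exact ⟨i, hi, key i x hx⟩

/-- If `g` is a word of length `≤ λ(n)` in `Δ_n`, then any spike decomposition of `g`
has level `< n`. -/
lemma level_lt
    (hdisj : ∀ n, 1 ≤ n → Disjoint (Λ.Sig n) (wordsLe (Λ.Delta n) (3 * Λ.lam n)))
    {g p s q : G} {n m : ℕ} (hgw : g ∈ wordsLe (Λ.Delta n) (Λ.lam n))
    (hm : 1 ≤ m) (hs : s ∈ Λ.Sig m) (hg : g = p * s * q)
    (hp : p ∈ wordsLe (Λ.Delta m) (Λ.lam m))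
    (hq : q ∈ wordsLe (Λ.Delta m) (Λ.lam m)) : m < n := by
  by_contra hc
  push_neg at hc
  have hgw' : g ∈ wordsLe (Λ.Delta m) (Λ.lam m) :=
    wordsLe_mono (Λ.delta_mono hc) (Λ.lam_mono hc) hgw
  have hsinv := Λ.delta_inv hm
  have hseq : s = p⁻¹ * g * q⁻¹ := by rw [hg]; group
  have hsw : s ∈ wordsLe (Λ.Delta m) (Λ.lam m + Λ.lam m + Λ.lam m) := by
    rw [hseq]
    exact wordsLe_mul (wordsLe_mul (wordsLe_inv hsinv hp) hgw') (wordsLe_inv hsinv hq)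
  have hsw' : s ∈ wordsLe (Λ.Delta m) (3 * Λ.lam m) :=
    wordsLe_mono (Set.Subset.refl _) (by omega) hsw
  exact Set.disjoint_left.mp (hdisj m hm) hs hsw'

/-- `g` admits a spike decomposition at level `n`. -/
def SpikedAt (n : ℕ) (g : G) : Prop :=
  1 ≤ n ∧ ∃ p s q, g = p * s * q ∧ s ∈ Λ.Sig n ∧
    p ∈ wordsLe (Λ.Delta n) (Λ.lam n) ∧ q ∈ wordsLe (Λ.Delta n) (Λ.lam n)

lemma spiked_iff {g : G} : Λ.Spiked g ↔ ∃ n, Λ.SpikedAt n g := by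
  constructor
  · rintro ⟨p, s, q, heq, n, hn, hs, hp, hq⟩
    exact ⟨n, hn, p, s, q, heq, hs, hp, hq⟩
  · rintro ⟨n, hn, p, s, q, heq, hs, hp, hq⟩
    exact ⟨p, s, q, heq, n, hn, hs, hp, hq⟩

open Classical in
/-- The level of (the chosen spike decomposition of) `g`; `0` if `g` is unspiked. -/
noncomputable def lvl (g : G) : ℕ :=
  if h : ∃ n, Λ.SpikedAt n g then h.choose else 0

open Classical in
/-- The prefix of the chosen spike decomposition of `g`; `g` itself if unspiked. -/
noncomputable def pref (g : G) : G :=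
  if h : Λ.Spiked g then h.choose else g

lemma lvl_spikedAt {g : G} (h : Λ.Spiked g) : Λ.SpikedAt (Λ.lvl g) g := by
  rw [Λ.spiked_iff] at h
  unfold GroupScale.lvl
  rw [dif_pos h]
  exact h.choose_spec

lemma lvl_pos {g : G} (h : Λ.Spiked g) : 1 ≤ Λ.lvl g := (Λ.lvl_spikedAt h).1

lemma lvl_of_not_spiked {g : G} (h : ¬ Λ.Spiked g) : Λ.lvl g = 0 := by
  unfold GroupScale.lvl
  rw [dif_neg]
  intro hc
  exact h (Λ.spiked_iff.mpr hc)

lemma pref_decomp {g : G} (h : Λ.Spiked g) :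
    ∃ s q, Λ.IsSpikeDecomp g (Λ.pref g) s q := by
  unfold GroupScale.pref
  rw [dif_pos h]
  exact h.choose_spec

lemma pref_of_not_spiked {g : G} (h : ¬ Λ.Spiked g) : Λ.pref g = g :=
  dif_neg h

/-- With unique decompositions, the chosen prefix matches the chosen level. -/
lemma pref_spikedAt
    (huniq : ∀ g p s q p' s' q', Λ.IsSpikeDecomp g p s q →
      Λ.IsSpikeDecomp g p' s' q' → p = p' ∧ s = s' ∧ q = q')
    {g : G} (h : Λ.Spiked g) :
    ∃ s q, g = Λ.pref g * s * q ∧ s ∈ Λ.Sig (Λ.lvl g) ∧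
      Λ.pref g ∈ wordsLe (Λ.Delta (Λ.lvl g)) (Λ.lam (Λ.lvl g)) ∧
      q ∈ wordsLe (Λ.Delta (Λ.lvl g)) (Λ.lam (Λ.lvl g)) := by
  obtain ⟨s, q, hd⟩ := Λ.pref_decomp h
  obtain ⟨hn1, p', s', q', heq, hs', hp', hq'⟩ := Λ.lvl_spikedAt h
  have hd' : Λ.IsSpikeDecomp g p' s' q' := ⟨heq, Λ.lvl g, hn1, hs', hp', hq'⟩
  obtain ⟨hp, hs, hq⟩ := huniq g _ _ _ _ _ _ hd hd'
  refine ⟨s, q, hd.1, ?_, ?_, ?_⟩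
  · rw [hs]; exact hs'
  · rw [hp]; exact hp'
  · rw [hq]; exact hq'

section Ladder

variable (huniq : ∀ g p s q p' s' q', Λ.IsSpikeDecomp g p s q →
      Λ.IsSpikeDecomp g p' s' q' → p = p' ∧ s = s' ∧ q = q')
  (hdisj : ∀ n, 1 ≤ n → Disjoint (Λ.Sig n) (wordsLe (Λ.Delta n) (3 * Λ.lam n)))

include huniq hdisj

lemma lvl_pref_lt {g : G} (h : Λ.Spiked g) : Λ.lvl (Λ.pref g) < Λ.lvl g := by
  obtain ⟨s, q, heq, hs, hpw, hq⟩ := Λ.pref_spikedAt huniq h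
  by_cases hps : Λ.Spiked (Λ.pref g)
  · obtain ⟨s', q', heq', hs', hpw', hq'⟩ := Λ.pref_spikedAt huniq hps
    exact Λ.level_lt hdisj hpw (Λ.lvl_pos hps) hs' heq' hpw' hq'
  · rw [Λ.lvl_of_not_spiked hps]
    exact Λ.lvl_pos h

lemma pref_ne {g : G} (h : Λ.Spiked g) : Λ.pref g ≠ g := by
  obtain ⟨s, q, heq, hs, hpw, hq⟩ := Λ.pref_spikedAt huniq h
  intro hc
  rw [hc] at heq
  have hsq : s = q⁻¹ := by
    have h0 : g * (s * q) = g * 1 := by rw [mul_one, ← mul_assoc]; exact heq.symm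
    exact eq_inv_of_mul_eq_one_left (mul_left_cancel h0)
  have hn1 := Λ.lvl_pos h
  have hsw : s ∈ wordsLe (Λ.Delta (Λ.lvl g)) (3 * Λ.lam (Λ.lvl g)) := by
    rw [hsq]
    exact wordsLe_mono (Set.Subset.refl _) (by omega)
      (wordsLe_inv (Λ.delta_inv hn1) hq)
  exact Set.disjoint_left.mp (hdisj _ hn1) hs hsw

omit hdisj in
lemma adj_cases {a b : G} (hab : (SimpleGraph.fromRel (despikeRel Λ)).Adj a b) :
    (Λ.Spiked b ∧ Λ.pref b = a) ∨ (Λ.Spiked a ∧ Λ.pref a = b) := by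
  rw [SimpleGraph.fromRel_adj] at hab
  obtain ⟨hne, h | h⟩ := hab
  · left
    obtain ⟨s, q, hd⟩ := h
    have hb : Λ.Spiked b := ⟨a, s, q, hd⟩
    obtain ⟨s', q', hd'⟩ := Λ.pref_decomp hb
    exact ⟨hb, (huniq b _ _ _ _ _ _ hd' hd).1⟩
  · right
    obtain ⟨s, q, hd⟩ := h
    have ha : Λ.Spiked a := ⟨b, s, q, hd⟩
    obtain ⟨s', q', hd'⟩ := Λ.pref_decomp ha
    exact ⟨ha, (huniq a _ _ _ _ _ _ hd' hd).1⟩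

lemma adj_pref {g : G} (h : Λ.Spiked g) :
    (SimpleGraph.fromRel (despikeRel Λ)).Adj g (Λ.pref g) := by
  rw [SimpleGraph.fromRel_adj]
  refine ⟨(Λ.pref_ne huniq hdisj h).symm, Or.inr ?_⟩
  exact Λ.pref_decomp h

end Ladder

/-- `u` is the terminal vertex of the despiking orbit of `g`. -/
def Term (g u : G) : Prop := ∃ k, (Λ.pref)^[k] g = u ∧ ¬ Λ.Spiked u

lemma term_unique {g u u' : G} (h : Λ.Term g u) (h' : Λ.Term g u') : u = u' := by
  obtain ⟨k, hk, hu⟩ := h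
  obtain ⟨k', hk', hu'⟩ := h'
  have key : ∀ {a b : G} {i j : ℕ}, i ≤ j → (Λ.pref)^[i] g = a → ¬ Λ.Spiked a →
      (Λ.pref)^[j] g = b → a = b := by
    intro a b i j hij ha hna hb
    have : (Λ.pref)^[j] g = (Λ.pref)^[j - i] ((Λ.pref)^[i] g) := by
      rw [← Function.iterate_add_apply]
      congr 1
      omega
    rw [this, ha, Function.iterate_fixed (Λ.pref_of_not_spiked hna)] at hb
    exact hb.symm ▸ rfl
  rcases le_total k k' with hle | hle
  · exact key hle hk hu hk'
  · exact (key hle hk' hu' hk).symm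

end GroupScale

/-- for a ladder (unique spike decompositions and
`Σ_n ∩ Δ_n^{3λ(n)} = ∅`), the despiking graph is a forest and each connected
component contains a unique unspiked vertex. -/
theorem despiking_graph_is_forest
    {G : Type*} [Group G] [Countable G] (Λ : GroupScale G)
    (huniq : ∀ g p s q p' s' q', Λ.IsSpikeDecomp g p s q →
      Λ.IsSpikeDecomp g p' s' q' → p = p' ∧ s = s' ∧ q = q')
    (hdisj : ∀ n, 1 ≤ n → Disjoint (Λ.Sig n) (wordsLe (Λ.Delta n) (3 * Λ.lam n))) :
    (SimpleGraph.fromRel (despikeRel Λ)).IsAcyclic ∧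
    ∀ g : G, ∃! u : G,
      (SimpleGraph.fromRel (despikeRel Λ)).Reachable g u ∧ ¬ Λ.Spiked u := by
  classical
  open SimpleGraph Walk in
  -- basic facts
  have term_step : ∀ {g u : G}, Λ.Term (Λ.pref g) u → Λ.Term g u := by
    rintro g u ⟨k, hk, hu⟩
    exact ⟨k + 1, by rw [Function.iterate_succ_apply]; exact hk, hu⟩
  have term_exists : ∀ g : G, ∃ u, Λ.Term g u := by
    suffices H : ∀ N g, Λ.lvl g ≤ N → ∃ u, Λ.Term g u by
      exact fun g => H (Λ.lvl g) g le_rfl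
    intro N
    induction N with
    | zero =>
      intro g hg
      by_cases h : Λ.Spiked g
      · exact absurd hg (by have := Λ.lvl_pos h; omega)
      · exact ⟨g, 0, rfl, h⟩
    | succ N ih =>
      intro g hg
      by_cases h : Λ.Spiked g
      · obtain ⟨u, hu⟩ := ih (Λ.pref g)
          (by have := Λ.lvl_pref_lt huniq hdisj h; omega)
        exact ⟨u, term_step hu⟩
      · exact ⟨g, 0, rfl, h⟩
  have term_adj : ∀ {a b u : G}, (SimpleGraph.fromRel (despikeRel Λ)).Adj a b →
      Λ.Term a u → Λ.Term b u := by
    intro a b u hab hta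
    rcases Λ.adj_cases huniq hab with ⟨hb, hpb⟩ | ⟨ha, hpa⟩
    · exact term_step (by rwa [hpb])
    · obtain ⟨k, hk, hu⟩ := hta
      match k, hk with
      | 0, hk => exact absurd (hk ▸ ha) hu
      | j + 1, hk =>
        refine ⟨j, ?_, hu⟩
        rw [Function.iterate_succ_apply, hpa] at hk
        exact hk
  have term_reach : ∀ {a b u : G}, (SimpleGraph.fromRel (despikeRel Λ)).Reachable a b →
      Λ.Term a u → Λ.Term b u := by
    intro a b u h
    obtain ⟨w⟩ := h
    induction w with
    | nil => exact id
    | cons hadj p ih => exact fun ht => ih (term_adj hadj ht)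
  have term_reachable : ∀ {g u : G}, Λ.Term g u →
      (SimpleGraph.fromRel (despikeRel Λ)).Reachable g u := by
    suffices H : ∀ (k : ℕ) (g u : G), (Λ.pref)^[k] g = u → ¬ Λ.Spiked u →
        (SimpleGraph.fromRel (despikeRel Λ)).Reachable g u by
      rintro g u ⟨k, hk, hu⟩; exact H k g u hk hu
    intro k
    induction k with
    | zero => intro g u hk _; exact hk ▸ SimpleGraph.Reachable.refl g
    | succ j ih =>
      intro g u hk hu
      have h1 : (SimpleGraph.fromRel (despikeRel Λ)).Reachable g (Λ.pref g) := by
        by_cases hs : Λ.Spiked g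
        · exact (Λ.adj_pref huniq hdisj hs).reachable
        · rw [Λ.pref_of_not_spiked hs]
      exact h1.trans (ih (Λ.pref g) u
        (by rwa [Function.iterate_succ_apply] at hk) hu)
  constructor
  · -- acyclicity
    intro v c hc
    have hne : c.support.toFinset.Nonempty :=
      ⟨v, List.mem_toFinset.mpr c.start_mem_support⟩
    obtain ⟨u, huS, humax⟩ := Finset.exists_max_image c.support.toFinset Λ.lvl hne
    rw [List.mem_toFinset] at huS
    have hmax : ∀ x ∈ c.support, Λ.lvl x ≤ Λ.lvl u :=
      fun x hx => humax x (List.mem_toFinset.mpr hx)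
    set d := c.rotate u huS with hd
    have hdc : d.IsCycle := hc.rotate huS
    have hdsup : ∀ x ∈ d.support, Λ.lvl x ≤ Λ.lvl u := by
      intro x hx
      rw [Walk.support_eq_cons, List.mem_cons] at hx
      rcases hx with rfl | hx
      · exact le_rfl
      · have hx' : x ∈ c.support.tail := (Walk.support_rotate c u huS).mem_iff.mp hx
        exact hmax x (by rw [Walk.support_eq_cons]; exact List.mem_cons_of_mem _ hx')
    have key : ∀ {w : G}, (SimpleGraph.fromRel (despikeRel Λ)).Adj u w →
        w ∈ d.support → Λ.pref u = w := by
      intro w hadj hw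
      rcases Λ.adj_cases huniq hadj with ⟨hw2, hpw⟩ | ⟨hu2, hpu⟩
      · exfalso
        have h1 : Λ.lvl (Λ.pref w) < Λ.lvl w := Λ.lvl_pref_lt huniq hdisj hw2
        rw [hpw] at h1
        exact absurd (hdsup w hw) (by omega)
      · exact hpu
    -- first edge
    obtain ⟨w, hadj, q, hdq⟩ := Walk.not_nil_iff.mp hdc.not_nil
    have hrevnn : ¬ d.reverse.Nil := by
      rw [Walk.not_nil_iff_lt_length, Walk.length_reverse]
      have := hdc.three_le_length
      omega
    obtain ⟨w2, hadj2, q2, hdq2⟩ := Walk.not_nil_iff.mp hrevnn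
    have hwmem : w ∈ d.support := by
      rw [hdq, Walk.support_cons]
      exact List.mem_cons_of_mem _ q.start_mem_support
    have hw2mem : w2 ∈ d.support := by
      have : w2 ∈ d.reverse.support := by
        rw [hdq2, Walk.support_cons]
        exact List.mem_cons_of_mem _ q2.start_mem_support
      rwa [Walk.support_reverse, List.mem_reverse] at this
    have hpw : Λ.pref u = w := key hadj hwmem
    have hpw2 : Λ.pref u = w2 := key hadj2 hw2mem
    have hww2 : w2 = w := by rw [← hpw, ← hpw2]
    subst hww2
    -- edge list contradiction
    have hE : d.edges = s(u, w2) :: q.edges := by rw [hdq, Walk.edges_cons]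
    have hE2 : d.edges.reverse = s(u, w2) :: q2.edges := by
      rw [← Walk.edges_reverse, hdq2, Walk.edges_cons]
    have hE3 : d.edges = q2.edges.reverse ++ [s(u, w2)] := by
      have := congrArg List.reverse hE2
      rwa [List.reverse_reverse, List.reverse_cons] at this
    have hnodup : (s(u, w2) :: q.edges).Nodup := by
      rw [← hE]; exact hdc.isCircuit.isTrail.edges_nodup
    have hlen : 3 ≤ d.edges.length := by
      rw [Walk.length_edges]; exact hdc.three_le_length
    rcases hrev : q2.edges.reverse with _ | ⟨y, t⟩
    · rw [hrev] at hE3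
      simp only [List.nil_append] at hE3
      rw [hE3] at hlen
      simp at hlen
    · rw [hrev, List.cons_append] at hE3
      rw [hE] at hE3
      obtain ⟨hy, hq⟩ := List.cons_eq_cons.mp hE3
      have hmem : s(u, w2) ∈ q.edges := by
        rw [hq]
        exact List.mem_append_right _ (List.mem_singleton_self _)
      exact (List.nodup_cons.mp hnodup).1 hmem
  · -- unique unspiked vertex in each component
    intro g
    obtain ⟨u, hu⟩ := term_exists g
    obtain ⟨k, hk, hns⟩ := hu
    refine ⟨u, ⟨term_reachable ⟨k, hk, hns⟩, hns⟩, ?_⟩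
    rintro u' ⟨hr', hns'⟩
    have h1 : Λ.Term u' u' := ⟨0, rfl, hns'⟩
    have h2 : Λ.Term g u' := term_reach hr'.symm h1
    exact Λ.term_unique h2 ⟨k, hk, hns⟩
end
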